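/- arXiv:1902.04452 — 10 statements merged into one kernel-verified Lean document; each statement's English description precedes it below -/
import Mathlib

section
/- Let b be a daughter distribution function and suppose there exists m₀ > 1 such that liminf_{y→∞} N_{m₀}(y)/y^{m₀} > 0. Then for every m > 1 one has liminf_{y→∞} N_m(y)/y^m > 0. -/
open MeasureTheory Set Filter
open scoped ENNReal

/-- `n_m(y) = ∫₀^y x^m b(x,y) dx`. -/
noncomputable def nmom (b : ℝ → ℝ → ℝ) (m y : ℝ) : ℝ :=
  ∫ x in Set.Ioo 0 y, x ^ m * b x y

/-- `N_m(y) = y^m − n_m(y)`. -/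
noncomputable def Nmom (b : ℝ → ℝ → ℝ) (m y : ℝ) : ℝ :=
  y ^ m - nmom b m y

lemma lemA (s : ℝ) (h0 : 0 ≤ s) (h1 : s ≤ 1) (k : ℕ) : 1 - s ^ k ≤ k * (1 - s) := by
  induction k with
  | zero => simp
  | succ n ih =>
    have h1' : s ^ n ≤ 1 := pow_le_one₀ h0 h1
    have h2 : s ^ (n + 1) = s * s ^ n := by ring
    have h3 : (0:ℝ) ≤ s ^ n := pow_nonneg h0 n
    push_cast
    nlinarith

lemma lemB (t α β : ℝ) (ht0 : 0 < t) (ht1 : t ≤ 1) (hα : 0 < α) (k : ℕ)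
    (hk : β ≤ k * α) : 1 - t ^ β ≤ k * (1 - t ^ α) := by
  have h1 : t ^ ((k : ℝ) * α) ≤ t ^ β := Real.rpow_le_rpow_of_exponent_ge ht0 ht1 hk
  have h2 : t ^ ((k : ℝ) * α) = (t ^ α) ^ k := by
    rw [mul_comm, Real.rpow_mul ht0.le, Real.rpow_natCast]
  have h3 := lemA (t ^ α) (Real.rpow_nonneg ht0.le α)
    (Real.rpow_le_one ht0.le ht1 hα.le) k
  linarith [h2 ▸ h1]

/-- if `liminf_{y→∞} N_{m₀}(y)/y^{m₀} > 0` for some `m₀ > 1`, then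
`liminf_{y→∞} N_m(y)/y^m > 0` for every `m > 1`. -/
theorem stmt0 (b : ℝ → ℝ → ℝ)
    (hb_meas : Measurable (Function.uncurry b))
    (hb_nonneg : ∀ x y, 0 ≤ b x y)
    (hb_supp : ∀ y : ℝ, 0 < y → ∀ᵐ x ∂(volume : Measure ℝ), y < x → b x y = 0)
    (hb_mass : ∀ y : ℝ, 0 < y → ∫ x in Set.Ioo 0 y, x * b x y = y)
    (m₀ : ℝ) (hm₀ : 1 < m₀)
    (h : 0 < Filter.liminf (fun y : ℝ => Nmom b m₀ y / y ^ m₀) Filter.atTop) :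
    ∀ m : ℝ, 1 < m →
      0 < Filter.liminf (fun y : ℝ => Nmom b m y / y ^ m) Filter.atTop := by
  -- measurability of slices
  have meas_b : ∀ y : ℝ, Measurable fun x => b x y := fun y =>
    hb_meas.comp (measurable_id.prodMk measurable_const)
  -- integrability of x * b x y
  have int1 : ∀ y : ℝ, 0 < y → IntegrableOn (fun x => x * b x y) (Ioo 0 y) := by
    intro y hy
    by_contra hni
    have := integral_undef hni
    rw [hb_mass y hy] at this
    exact hy.ne' this
  -- integrability of x^m * b x y for m ≥ 1
  have intm : ∀ m : ℝ, 1 ≤ m → ∀ y : ℝ, 0 < y →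
      IntegrableOn (fun x => x ^ m * b x y) (Ioo 0 y) := by
    intro m hm y hy
    apply Integrable.mono' (((int1 y hy).const_mul (y ^ (m - 1))))
    · exact ((measurable_id.pow_const m).mul (meas_b y)).aestronglyMeasurable
    · rw [ae_restrict_iff' measurableSet_Ioo]
      refine ae_of_all _ fun x hx => ?_
      have hx0 : (0:ℝ) < x := hx.1
      have hxy : x ≤ y := hx.2.le
      have hxm : x ^ m = x ^ (m - 1) * x := by
        rw [Real.rpow_sub hx0, Real.rpow_one]
        field_simp
      have hle : x ^ (m - 1) ≤ y ^ (m - 1) :=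
        Real.rpow_le_rpow hx0.le hxy (by linarith)
      have hb0 := hb_nonneg x y
      have hxm0 : (0:ℝ) ≤ x ^ m := Real.rpow_nonneg hx0.le m
      rw [Real.norm_of_nonneg (mul_nonneg hxm0 hb0), hxm]
      calc x ^ (m - 1) * x * b x y ≤ y ^ (m - 1) * x * b x y := by
            apply mul_le_mul_of_nonneg_right _ hb0
            exact mul_le_mul_of_nonneg_right hle hx0.le
        _ = y ^ (m - 1) * (x * b x y) := by ring
  -- representation of Nmom as an integral
  have rep : ∀ m : ℝ, 1 ≤ m → ∀ y : ℝ, 0 < y →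
      Nmom b m y = ∫ x in Ioo 0 y, (y ^ (m - 1) - x ^ (m - 1)) * (x * b x y) := by
    intro m hm y hy
    have heq : EqOn (fun x : ℝ => (y ^ (m - 1) - x ^ (m - 1)) * (x * b x y))
        (fun x : ℝ => y ^ (m - 1) * (x * b x y) - x ^ m * b x y) (Ioo 0 y) := by
      intro x hx
      have hx0 : (0:ℝ) < x := hx.1
      have hxm : x ^ m = x ^ (m - 1) * x := by
        rw [Real.rpow_sub hx0, Real.rpow_one]
        field_simp
      simp only [Pi.sub_apply, hxm]; ring
    rw [setIntegral_congr_fun measurableSet_Ioo heq,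
      integral_sub (((int1 y hy).const_mul (y ^ (m - 1)))) (intm m hm y hy),
      integral_const_mul, hb_mass y hy]
    have hyy : y ^ (m - 1) * y = y ^ m := by
      rw [Real.rpow_sub hy, Real.rpow_one]
      field_simp
    rw [hyy]
    rfl
  -- integrability of the representation integrand
  have intrep : ∀ m : ℝ, 1 ≤ m → ∀ y : ℝ, 0 < y →
      IntegrableOn (fun x => (y ^ (m - 1) - x ^ (m - 1)) * (x * b x y)) (Ioo 0 y) := by
    intro m hm y hy
    apply IntegrableOn.congr_fun
      (((int1 y hy).const_mul (y ^ (m - 1))).sub (intm m hm y hy)) _ measurableSet_Ioo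
    intro x hx
    have hx0 : (0:ℝ) < x := hx.1
    have hxm : x ^ m = x ^ (m - 1) * x := by
      rw [Real.rpow_sub hx0, Real.rpow_one]
      field_simp
    simp only [Pi.sub_apply, hxm]; ring
  -- Nmom nonneg and ≤ y^m
  have Nnn : ∀ m : ℝ, 1 ≤ m → ∀ y : ℝ, 0 < y → 0 ≤ Nmom b m y := by
    intro m hm y hy
    rw [rep m hm y hy]
    apply setIntegral_nonneg measurableSet_Ioo
    intro x hx
    have hle : x ^ (m - 1) ≤ y ^ (m - 1) :=
      Real.rpow_le_rpow hx.1.le hx.2.le (by linarith)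
    exact mul_nonneg (by linarith) (mul_nonneg hx.1.le (hb_nonneg x y))
  have Nle : ∀ m : ℝ, ∀ y : ℝ, 0 < y → Nmom b m y ≤ y ^ m := by
    intro m y hy
    have : 0 ≤ nmom b m y := by
      apply setIntegral_nonneg measurableSet_Ioo
      intro x hx
      exact mul_nonneg (Real.rpow_nonneg hx.1.le m) (hb_nonneg x y)
    simp only [Nmom]; linarith
  -- main proof
  intro m hm
  set k : ℕ := ⌈(m₀ - 1) / (m - 1)⌉₊ with hkdef
  have hk1 : 1 ≤ k := by
    apply Nat.one_le_ceil_iff.mpr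
    exact div_pos (by linarith) (by linarith)
  have hkα : m₀ - 1 ≤ (k : ℝ) * (m - 1) := by
    have := Nat.le_ceil ((m₀ - 1) / (m - 1))
    rw [div_le_iff₀ (by linarith : (0:ℝ) < m - 1)] at this
    linarith
  -- key comparison for each y > 0
  have key : ∀ y : ℝ, 0 < y →
      Nmom b m₀ y / y ^ m₀ ≤ (k : ℝ) * (Nmom b m y / y ^ m) := by
    intro y hy
    have hym : (0:ℝ) < y ^ m := Real.rpow_pos_of_pos hy m
    have hym₀ : (0:ℝ) < y ^ m₀ := Real.rpow_pos_of_pos hy m₀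
    rw [mul_div_assoc' (k:ℝ), div_le_div_iff₀ hym₀ hym]
    -- Nmom b m₀ y * y ^ m ≤ k * Nmom b m y * y ^ m₀
    have core : ∀ x ∈ Ioo (0:ℝ) y,
        y ^ m * ((y ^ (m₀ - 1) - x ^ (m₀ - 1)) * (x * b x y)) ≤
        (k : ℝ) * y ^ m₀ * ((y ^ (m - 1) - x ^ (m - 1)) * (x * b x y)) := by
      intro x hx
      have hx0 : (0:ℝ) < x := hx.1
      have hxy : x < y := hx.2
      set t := x / y with htdef
      have ht0 : 0 < t := div_pos hx0 hy
      have ht1 : t ≤ 1 := by rw [div_le_one hy]; exact hxy.le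
      have hxt : x = t * y := (div_mul_cancel₀ x hy.ne').symm
      have hpow : ∀ p : ℝ, x ^ p = t ^ p * y ^ p := by
        intro p; rw [hxt, Real.mul_rpow ht0.le hy.le]
      have hB := lemB t (m - 1) (m₀ - 1) ht0 ht1 (by linarith) k hkα
      have hyM : (0:ℝ) < y ^ m * y ^ (m₀ - 1) := by positivity
      have hxb : 0 ≤ x * b x y := mul_nonneg hx0.le (hb_nonneg x y)
      have h1 : y ^ m * (y ^ (m₀ - 1) - x ^ (m₀ - 1)) =
          y ^ m * y ^ (m₀ - 1) * (1 - t ^ (m₀ - 1)) := by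
        rw [hpow (m₀ - 1)]; ring
      have h2 : (k : ℝ) * y ^ m₀ * (y ^ (m - 1) - x ^ (m - 1)) =
          (k : ℝ) * (y ^ m₀ * y ^ (m - 1)) * (1 - t ^ (m - 1)) := by
        rw [hpow (m - 1)]; ring
      have hyy : y ^ m₀ * y ^ (m - 1) = y ^ m * y ^ (m₀ - 1) := by
        rw [← Real.rpow_add hy, ← Real.rpow_add hy]; ring_nf
      have hfin : y ^ m * (y ^ (m₀ - 1) - x ^ (m₀ - 1)) ≤
          (k : ℝ) * y ^ m₀ * (y ^ (m - 1) - x ^ (m - 1)) := by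
        rw [h1, h2, hyy]
        calc y ^ m * y ^ (m₀ - 1) * (1 - t ^ (m₀ - 1))
            ≤ y ^ m * y ^ (m₀ - 1) * ((k : ℝ) * (1 - t ^ (m - 1))) :=
              mul_le_mul_of_nonneg_left hB hyM.le
          _ = (k : ℝ) * (y ^ m * y ^ (m₀ - 1)) * (1 - t ^ (m - 1)) := by ring
      calc y ^ m * ((y ^ (m₀ - 1) - x ^ (m₀ - 1)) * (x * b x y))
          = y ^ m * (y ^ (m₀ - 1) - x ^ (m₀ - 1)) * (x * b x y) := by ring
        _ ≤ (k : ℝ) * y ^ m₀ * (y ^ (m - 1) - x ^ (m - 1)) * (x * b x y) :=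
            mul_le_mul_of_nonneg_right hfin hxb
        _ = (k : ℝ) * y ^ m₀ * ((y ^ (m - 1) - x ^ (m - 1)) * (x * b x y)) := by ring
    have hmono : ∫ x in Ioo 0 y, y ^ m * ((y ^ (m₀ - 1) - x ^ (m₀ - 1)) * (x * b x y)) ≤
        ∫ x in Ioo 0 y, (k : ℝ) * y ^ m₀ * ((y ^ (m - 1) - x ^ (m - 1)) * (x * b x y)) := by
      apply setIntegral_mono_on ((intrep m₀ hm₀.le y hy).const_mul _)
        ((intrep m hm.le y hy).const_mul _) measurableSet_Ioo core
    rw [integral_const_mul, integral_const_mul] at hmono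
    rw [← rep m₀ hm₀.le y hy, ← rep m hm.le y hy] at hmono
    calc Nmom b m₀ y * y ^ m = y ^ m * Nmom b m₀ y := by ring
      _ ≤ (k : ℝ) * y ^ m₀ * Nmom b m y := hmono
      _ = (k : ℝ) * Nmom b m y * y ^ m₀ := by ring
  -- filter arguments
  set g : ℝ → ℝ := fun y => Nmom b m₀ y / y ^ m₀ with hgdef
  set f : ℝ → ℝ := fun y => Nmom b m y / y ^ m with hfdef
  have hgle1 : ∀ᶠ y in atTop, g y ≤ 1 := by
    filter_upwards [eventually_gt_atTop (0:ℝ)] with y hy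
    have := Nle m₀ y hy
    have hym₀ : (0:ℝ) < y ^ m₀ := Real.rpow_pos_of_pos hy m₀
    rw [hgdef]; exact div_le_one_of_le₀ this hym₀.le
  have hfle1 : ∀ᶠ y in atTop, f y ≤ 1 := by
    filter_upwards [eventually_gt_atTop (0:ℝ)] with y hy
    have := Nle m y hy
    have hym : (0:ℝ) < y ^ m := Real.rpow_pos_of_pos hy m
    rw [hfdef]; exact div_le_one_of_le₀ this hym.le
  have hgnn : ∀ᶠ y in atTop, 0 ≤ g y := by
    filter_upwards [eventually_gt_atTop (0:ℝ)] with y hy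
    exact div_nonneg (Nnn m₀ hm₀.le y hy) (Real.rpow_pos_of_pos hy m₀).le
  set L := Filter.liminf g Filter.atTop with hL
  have hL0 : 0 < L := h
  have hbg : IsBoundedUnder (· ≥ ·) atTop g :=
    ⟨0, by simpa [Filter.eventually_map] using hgnn⟩
  have hgev : ∀ᶠ y in atTop, L / 2 < g y :=
    eventually_lt_of_lt_liminf (by linarith) hbg
  have hk0 : (0:ℝ) < k := by exact_mod_cast hk1
  have hfev : ∀ᶠ y in atTop, L / (2 * k) ≤ f y := by
    filter_upwards [hgev, eventually_gt_atTop (0:ℝ)] with y hgy hy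
    have hkey := key y hy
    have hfy : f y = Nmom b m y / y ^ m := rfl
    have hgy' : g y = Nmom b m₀ y / y ^ m₀ := rfl
    rw [div_le_iff₀ (by positivity : (0:ℝ) < 2 * k)]
    nlinarith [hkey, hgy]
  have hcobf : IsCoboundedUnder (· ≥ ·) atTop f :=
    isCoboundedUnder_ge_of_eventually_le atTop hfle1
  have hlif : L / (2 * (k:ℝ)) ≤ Filter.liminf f atTop := le_liminf_of_le hcobf hfev
  have hpos : 0 < L / (2 * (k:ℝ)) := by positivity
  linarith
end

section
/- Let b be a daughter distribution function and let y > 0 be such that b(x,y) = 0 for a.e. x > y and ∫₀^y x·b(x,y) dx = y. Then the map m ↦ N_m(y)/y^m is concave on [1,∞): for all 1 ≤ m₁ ≤ m₂ and λ ∈ [0,1], N_{λm₁+(1−λ)m₂}(y)/y^{λm₁+(1−λ)m₂} ≥ λ·N_{m₁}(y)/y^{m₁} + (1−λ)·N_{m₂}(y)/y^{m₂}. -/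
open MeasureTheory Set Filter
open scoped ENNReal

/-- for a fixed `y > 0`, the map `m ↦ N_m(y)/y^m` is concave on `[1,∞)`. -/
theorem stmt2 (b : ℝ → ℝ → ℝ) (y : ℝ) (hy : 0 < y)
    (hb_meas : Measurable (Function.uncurry b))
    (hb_nonneg : ∀ x y, 0 ≤ b x y)
    (hb_supp : ∀ᵐ x ∂(volume : Measure ℝ), y < x → b x y = 0)
    (hb_mass : ∫ x in Set.Ioo 0 y, x * b x y = y) :
    ∀ m₁ m₂ t : ℝ, 1 ≤ m₁ → m₁ ≤ m₂ → 0 ≤ t → t ≤ 1 →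
      t * (Nmom b m₁ y / y ^ m₁) + (1 - t) * (Nmom b m₂ y / y ^ m₂)
        ≤ Nmom b (t * m₁ + (1 - t) * m₂) y / y ^ (t * m₁ + (1 - t) * m₂) := by
  intro m₁ m₂ t hm₁ hm₁₂ ht ht1
  set m : ℝ := t * m₁ + (1 - t) * m₂ with hmdef
  have hm2 : 1 ≤ m₂ := le_trans hm₁ hm₁₂
  have hm1 : 1 ≤ m := by nlinarith
  -- measurability
  have hmeasb : Measurable (fun x => b x y) :=
    hb_meas.comp (measurable_id.prodMk measurable_const)
  have hmeas : ∀ r : ℝ, 0 ≤ r → Measurable (fun x : ℝ => x ^ r * b x y) := fun r hr =>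
    (Real.continuous_rpow_const hr).measurable.mul hmeasb
  -- integrability of x * b x y on Ioo 0 y
  have hib : IntegrableOn (fun x => x * b x y) (Ioo 0 y) := by
    by_contra h
    rw [MeasureTheory.integral_undef h] at hb_mass
    linarith
  -- integrability of x^r * b x y on Ioo 0 y for r ≥ 1
  have hint : ∀ r : ℝ, 1 ≤ r → IntegrableOn (fun x : ℝ => x ^ r * b x y) (Ioo 0 y) := by
    intro r hr
    refine Integrable.mono' (hib.const_mul (y ^ (r - 1)))
      ((hmeas r (by linarith)).aestronglyMeasurable) ?_
    filter_upwards [ae_restrict_mem measurableSet_Ioo] with x hx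
    have hx0 : 0 < x := hx.1
    have hpow : x ^ r = x ^ (r - 1) * x := by
      rw [← Real.rpow_add_one hx0.ne' (r - 1)]; ring_nf
    have hle : x ^ (r - 1) ≤ y ^ (r - 1) :=
      Real.rpow_le_rpow hx0.le hx.2.le (by linarith)
    have hb0 := hb_nonneg x y
    have h1 : 0 ≤ x ^ r * b x y :=
      mul_nonneg (Real.rpow_nonneg hx0.le r) hb0
    rw [Real.norm_of_nonneg h1, hpow]
    calc x ^ (r - 1) * x * b x y ≤ y ^ (r - 1) * x * b x y := by
          apply mul_le_mul_of_nonneg_right (mul_le_mul_of_nonneg_right hle hx0.le) hb0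
      _ = y ^ (r - 1) * (x * b x y) := by ring
  -- normalized integrals
  set I : ℝ → ℝ := fun r => ∫ x in Ioo 0 y, (x / y) ^ r * b x y with hIdef
  have hIeq : ∀ r : ℝ, 1 ≤ r → nmom b r y / y ^ r = I r := by
    intro r hr
    have : I r = ∫ x in Ioo 0 y, (x ^ r * b x y) / y ^ r := by
      apply setIntegral_congr_fun measurableSet_Ioo
      intro x hx
      simp only
      rw [Real.div_rpow hx.1.le hy.le]
      ring
    rw [this, integral_div, nmom]
  have hIint : ∀ r : ℝ, 1 ≤ r → IntegrableOn (fun x : ℝ => (x / y) ^ r * b x y) (Ioo 0 y) := by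
    intro r hr
    refine IntegrableOn.congr_fun ((hint r hr).div_const (y ^ r)) ?_ measurableSet_Ioo
    intro x hx
    simp only
    rw [Real.div_rpow hx.1.le hy.le]
    ring
  -- key convexity inequality
  have key : I m ≤ t * I m₁ + (1 - t) * I m₂ := by
    have hrhs : t * I m₁ + (1 - t) * I m₂
        = ∫ x in Ioo 0 y, (t * ((x / y) ^ m₁ * b x y) + (1 - t) * ((x / y) ^ m₂ * b x y)) := by
      rw [integral_add ((hIint m₁ hm₁).const_mul t) ((hIint m₂ hm2).const_mul (1 - t)),
        integral_const_mul, integral_const_mul]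
    rw [hrhs]
    refine setIntegral_mono_on (hIint m hm1)
      (((hIint m₁ hm₁).const_mul t).add ((hIint m₂ hm2).const_mul (1 - t)))
      measurableSet_Ioo ?_
    intro x hx
    have hu : 0 < x / y := div_pos hx.1 hy
    have hconv : (x / y) ^ m ≤ t * (x / y) ^ m₁ + (1 - t) * (x / y) ^ m₂ := by
      have h1 : (x / y) ^ m = Real.exp (m * Real.log (x / y)) := by
        rw [Real.rpow_def_of_pos hu]; ring_nf
      have h2 : (x / y) ^ m₁ = Real.exp (m₁ * Real.log (x / y)) := by
        rw [Real.rpow_def_of_pos hu]; ring_nf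
      have h3 : (x / y) ^ m₂ = Real.exp (m₂ * Real.log (x / y)) := by
        rw [Real.rpow_def_of_pos hu]; ring_nf
      rw [h1, h2, h3]
      have := convexOn_exp.2 (Set.mem_univ (m₁ * Real.log (x / y)))
        (Set.mem_univ (m₂ * Real.log (x / y))) ht (by linarith : (0:ℝ) ≤ 1 - t)
        (by ring : t + (1 - t) = 1)
      simp only [smul_eq_mul] at this
      calc Real.exp (m * Real.log (x / y))
          = Real.exp (t * (m₁ * Real.log (x / y)) + (1 - t) * (m₂ * Real.log (x / y))) := by
            rw [hmdef]; ring_nf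
        _ ≤ _ := this
    have hb0 := hb_nonneg x y
    calc (x / y) ^ m * b x y
        ≤ (t * (x / y) ^ m₁ + (1 - t) * (x / y) ^ m₂) * b x y :=
          mul_le_mul_of_nonneg_right hconv hb0
      _ = t * ((x / y) ^ m₁ * b x y) + (1 - t) * ((x / y) ^ m₂ * b x y) := by ring
  -- finish
  have hNdiv : ∀ r : ℝ, 1 ≤ r → Nmom b r y / y ^ r = 1 - I r := by
    intro r hr
    have hyr : (y : ℝ) ^ r ≠ 0 := (Real.rpow_pos_of_pos hy r).ne'
    rw [Nmom, sub_div, div_self hyr, hIeq r hr]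
  rw [hNdiv m₁ hm₁, hNdiv m₂ hm2, hNdiv m hm1]
  linarith
end

section
/- Let b be a daughter distribution function, let y > 0 be such that b(x,y) = 0 for a.e. x > y and ∫₀^y x·b(x,y) dx = y, and suppose N_{m₀}(y)/y^{m₀} ≥ δ for some m₀ > 1 and δ > 0. Then for every m ∈ (1, m₀], N_m(y)/y^m ≥ δ(m−1)/(m₀−1). -/
open MeasureTheory Set Filter
open scoped ENNReal

lemma key_convex (t a c : ℝ) (ht : 0 < t) (ha : 0 < a) (hac : a ≤ c) :
    a / c * (1 - t ^ c) ≤ 1 - t ^ a := by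
  have hc : 0 < c := ha.trans_le hac
  have hw1 : (0:ℝ) ≤ a / c := by positivity
  have hw2 : (0:ℝ) ≤ 1 - a / c := by
    have : a / c ≤ 1 := (div_le_one hc).2 hac
    linarith
  have h := convexOn_exp.2 (Set.mem_univ (c * Real.log t)) (Set.mem_univ 0) hw1 hw2 (by ring)
  simp only [smul_eq_mul, mul_zero, add_zero, Real.exp_zero, mul_one] at h
  have h1 : a / c * (c * Real.log t) = Real.log t * a := by field_simp
  rw [h1] at h
  rw [Real.rpow_def_of_pos ht a, Real.rpow_def_of_pos ht c]
  rw [mul_comm (Real.log t) c]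
  linarith

/-- if `N_{m₀}(y)/y^{m₀} ≥ δ` for some `m₀ > 1`, `δ > 0`, then, for
`1 < m ≤ m₀`, `N_m(y)/y^m ≥ δ (m−1)/(m₀−1)`. -/
theorem stmt3 (b : ℝ → ℝ → ℝ) (y : ℝ) (hy : 0 < y)
    (hb_meas : Measurable (Function.uncurry b))
    (hb_nonneg : ∀ x y, 0 ≤ b x y)
    (hb_supp : ∀ᵐ x ∂(volume : Measure ℝ), y < x → b x y = 0)
    (hb_mass : ∫ x in Set.Ioo 0 y, x * b x y = y)
    (m₀ δ : ℝ) (hm₀ : 1 < m₀) (hδ : 0 < δ)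
    (hN : δ ≤ Nmom b m₀ y / y ^ m₀) :
    ∀ m : ℝ, 1 < m → m ≤ m₀ →
      δ * (m - 1) / (m₀ - 1) ≤ Nmom b m y / y ^ m := by
  intro m hm hmm₀
  have hbm : Measurable fun x => b x y :=
    hb_meas.comp (measurable_id.prodMk measurable_const)
  have hf_int : IntegrableOn (fun x => x * b x y) (Ioo 0 y) volume := by
    by_contra h
    rw [integral_undef h] at hb_mass; linarith
  have hg_meas : ∀ s : ℝ, 0 ≤ s → Measurable fun x => (x / y) ^ s * (x * b x y) := by
    intro s hs
    exact ((Real.continuous_rpow_const hs).measurable.comp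
      (measurable_id.div_const y)).mul (measurable_id.mul hbm)
  have hg_int : ∀ s : ℝ, 0 ≤ s →
      IntegrableOn (fun x => (x / y) ^ s * (x * b x y)) (Ioo 0 y) volume := by
    intro s hs
    refine hf_int.mono' ((hg_meas s hs).aestronglyMeasurable) ?_
    filter_upwards [ae_restrict_mem measurableSet_Ioo] with x hx
    have hx0 : 0 < x := hx.1
    have hxy : x < y := hx.2
    have ht0 : 0 ≤ x / y := by positivity
    have ht1 : (x / y) ^ s ≤ 1 := Real.rpow_le_one ht0 (by
      rw [div_le_one hy]; exact hxy.le) hs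
    have hxb : 0 ≤ x * b x y := mul_nonneg hx0.le (hb_nonneg x y)
    rw [Real.norm_eq_abs, abs_of_nonneg (mul_nonneg (Real.rpow_nonneg ht0 s) hxb)]
    calc (x / y) ^ s * (x * b x y) ≤ 1 * (x * b x y) :=
          mul_le_mul_of_nonneg_right ht1 hxb
      _ = x * b x y := one_mul _
  -- value of ∫ g_s
  have hIs : ∀ s : ℝ, (∫ x in Ioo 0 y, (x / y) ^ s * (x * b x y)) =
      nmom b (s + 1) y / y ^ s := by
    intro s
    rw [show nmom b (s+1) y / y ^ s = ∫ x in Ioo 0 y, x ^ (s+1) * b x y / y ^ s from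
      (integral_div _ _).symm]
    refine setIntegral_congr_fun measurableSet_Ioo ?_
    intro x hx
    have hx0 : 0 < x := hx.1
    dsimp only
    rw [Real.rpow_add hx0, Real.rpow_one, Real.div_rpow hx0.le hy.le]
    field_simp
  set a := m - 1 with hadef
  set c := m₀ - 1 with hcdef
  have ha : 0 < a := by rw [hadef]; linarith
  have hc : 0 < c := by rw [hcdef]; linarith
  have hac : a ≤ c := by rw [hadef, hcdef]; linarith
  have hmono : (a / c) * ∫ x in Ioo 0 y, (x * b x y - (x / y) ^ c * (x * b x y)) ≤
      ∫ x in Ioo 0 y, (x * b x y - (x / y) ^ a * (x * b x y)) := by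
    rw [← smul_eq_mul, ← integral_smul]
    refine setIntegral_mono_on
      ((hf_int.sub (hg_int c hc.le)).smul (a / c)) (hf_int.sub (hg_int a ha.le))
      measurableSet_Ioo ?_
    intro x hx
    have hx0 : 0 < x := hx.1
    have ht : 0 < x / y := by positivity
    have hxb : 0 ≤ x * b x y := mul_nonneg hx0.le (hb_nonneg x y)
    have hk := key_convex (x / y) a c ht ha hac
    have h := mul_le_mul_of_nonneg_right hk hxb
    simp only [smul_eq_mul]
    nlinarith
  rw [integral_sub hf_int (hg_int c hc.le), integral_sub hf_int (hg_int a ha.le),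
    hb_mass, hIs, hIs] at hmono
  have hsa : a + 1 = m := by rw [hadef]; ring
  have hsc : c + 1 = m₀ := by rw [hcdef]; ring
  rw [hsa, hsc] at hmono
  have hP : (0:ℝ) < y ^ a := Real.rpow_pos_of_pos hy a
  have hQ : (0:ℝ) < y ^ c := Real.rpow_pos_of_pos hy c
  have hym : y ^ m = y ^ a * y := by
    rw [show m = a + 1 by rw [hadef]; ring, Real.rpow_add hy, Real.rpow_one]
  have hym₀ : y ^ m₀ = y ^ c * y := by
    rw [show m₀ = c + 1 by rw [hcdef]; ring, Real.rpow_add hy, Real.rpow_one]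
  unfold Nmom at hN ⊢
  rw [hym₀] at hN
  rw [hym]
  set u := nmom b m y
  set v := nmom b m₀ y
  have hN' : δ * y ≤ y - v / y ^ c := by
    rw [le_div_iff₀ (by positivity)] at hN
    have hv : v / y ^ c ≤ y - δ * y := by
      rw [div_le_iff₀ hQ]; nlinarith
    linarith
  have h2 : a / c * (δ * y) ≤ y - u / y ^ a :=
    le_trans (mul_le_mul_of_nonneg_left hN' (by positivity)) hmono
  rw [le_div_iff₀ (by positivity : (0:ℝ) < y ^ a * y)]
  have h3 := mul_le_mul_of_nonneg_left h2 hP.le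
  calc δ * a / c * (y ^ a * y) = y ^ a * (a / c * (δ * y)) := by ring
    _ ≤ y ^ a * (y - u / y ^ a) := h3
    _ = y ^ a * y - u := by field_simp
end

section
/- Let b be a daughter distribution function and let y > 0 be such that b(x,y) = 0 for a.e. x > y and ∫₀^y x·b(x,y) dx = y. Then: (i) n_1(y) = y, i.e. N_1(y) = 0; (ii) for every m > 1, n_m(y) < y^m, i.e. N_m(y) > 0; (iii) for every 0 ≤ m < 1, n_m(y) > y^m as a value in [0,∞], i.e. N_m(y) < 0. -/
/-!
Write `w(x) = x b(x,y)`, a nonnegative weight on `(0,y)` of total mass `y`. Then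
`n_m(y) = ∫ x^(m-1) w(x) dx` and `y^m = y^(m-1) ∫ w(x) dx`, so the sign of `N_m(y)` is that of
`y^(m-1) - x^(m-1)` on `(0,y)`: positive for `m > 1`, negative for `m < 1`. The inequalities are
strict because `w` does not vanish almost everywhere.
-/

open MeasureTheory Set Filter
open scoped ENNReal

section StrictComparison

variable {α : Type*} [MeasurableSpace α] {μ : Measure α}

theorem integral_lt_integral_of_ae_le_of_frequently_lt {f g : α → ℝ} (hf : Integrable f μ)
    (hg : Integrable g μ) (hle : f ≤ᵐ[μ] g) (hlt : ∃ᵐ x ∂μ, f x < g x) :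
    ∫ x, f x ∂μ < ∫ x, g x ∂μ := by
  rw [← sub_pos, ← integral_sub hg hf,
    integral_pos_iff_support_of_nonneg_ae (hle.mono fun x hx ↦ sub_nonneg.2 hx) (hg.sub hf)]
  exact pos_iff_ne_zero.2 fun h ↦
    frequently_ae_iff.1 hlt (measure_mono_null (fun x hx ↦ sub_ne_zero.2 (ne_of_gt hx)) h)

theorem frequently_mul_lt_mul_of_integral_ne_zero {f g w : α → ℝ} (hfg : ∀ᵐ x ∂μ, f x < g x)
    (hw : 0 ≤ᵐ[μ] w) (hw0 : ∫ x, w x ∂μ ≠ 0) : ∃ᵐ x ∂μ, f x * w x < g x * w x :=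
  ((frequently_ae_ne_zero_of_integral_ne_zero hw0).and_eventually (hfg.and hw)).mono
    fun _ ⟨hne, hlt, hnn⟩ ↦ mul_lt_mul_of_pos_right hlt (lt_of_le_of_ne hnn (Ne.symm hne))

end StrictComparison

section WeightOnInterval

variable {w : ℝ → ℝ} {y p : ℝ}

theorem setIntegral_rpow_mul_lt_of_pos (hw : IntegrableOn w (Ioo 0 y))
    (hw_nonneg : ∀ x ∈ Ioo 0 y, 0 ≤ w x) (hw0 : ∫ x in Ioo 0 y, w x ≠ 0) (hp : 0 < p) :
    ∫ x in Ioo 0 y, x ^ p * w x < y ^ p * ∫ x in Ioo 0 y, w x := by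
  have hlt : ∀ᵐ x ∂volume.restrict (Ioo 0 y), x ^ p < y ^ p :=
    ae_restrict_of_forall_mem measurableSet_Ioo fun x hx ↦ Real.rpow_lt_rpow hx.1.le hx.2 hp
  have hw_nonneg' : 0 ≤ᵐ[volume.restrict (Ioo 0 y)] w :=
    ae_restrict_of_forall_mem measurableSet_Ioo hw_nonneg
  have hint : IntegrableOn (fun x ↦ x ^ p * w x) (Ioo 0 y) := by
    refine hw.bdd_mul (c := y ^ p) (measurable_id.pow_const p).aestronglyMeasurable ?_
    filter_upwards [hlt, ae_restrict_mem measurableSet_Ioo] with x hx hmem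
    rw [Real.norm_of_nonneg (Real.rpow_nonneg hmem.1.le p)]
    exact hx.le
  rw [← integral_const_mul]
  refine integral_lt_integral_of_ae_le_of_frequently_lt hint (hw.const_mul _) ?_
    (frequently_mul_lt_mul_of_integral_ne_zero hlt hw_nonneg' hw0)
  filter_upwards [hlt, hw_nonneg'] with x hx hwx
  exact mul_le_mul_of_nonneg_right hx.le hwx

theorem ofReal_mul_setIntegral_lt_setLIntegral_rpow_mul_of_neg (hw : IntegrableOn w (Ioo 0 y))
    (hw_nonneg : ∀ x ∈ Ioo 0 y, 0 ≤ w x) (hw0 : ∫ x in Ioo 0 y, w x ≠ 0) (hp : p < 0) :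
    ENNReal.ofReal (y ^ p * ∫ x in Ioo 0 y, w x) <
      ∫⁻ x in Ioo 0 y, ENNReal.ofReal (x ^ p * w x) := by
  have hlt : ∀ᵐ x ∂volume.restrict (Ioo 0 y), y ^ p < x ^ p :=
    ae_restrict_of_forall_mem measurableSet_Ioo fun x hx ↦ Real.rpow_lt_rpow_of_neg hx.1 hx.2 hp
  have hw_nonneg' : 0 ≤ᵐ[volume.restrict (Ioo 0 y)] w :=
    ae_restrict_of_forall_mem measurableSet_Ioo hw_nonneg
  have hyw_nonneg : ∀ᵐ x ∂volume.restrict (Ioo 0 y), 0 ≤ y ^ p * w x :=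
    ae_restrict_of_forall_mem measurableSet_Ioo fun x hx ↦
      mul_nonneg (Real.rpow_nonneg (hx.1.trans hx.2).le p) (hw_nonneg x hx)
  have hyw : IntegrableOn (fun x ↦ y ^ p * w x) (Ioo 0 y) := hw.const_mul _
  rw [← integral_const_mul, ofReal_integral_eq_lintegral_ofReal hyw hyw_nonneg]
  refine lintegral_strict_mono_of_ae_le_of_frequently_ae_lt
    ((measurable_id.pow_const p).aemeasurable.mul hw.aemeasurable).ennreal_ofReal
    hyw.lintegral_lt_top.ne ?_ ?_
  · filter_upwards [hlt, hw_nonneg'] with x hx hwx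
    exact ENNReal.ofReal_le_ofReal (mul_le_mul_of_nonneg_right hx.le hwx)
  · refine ((frequently_mul_lt_mul_of_integral_ne_zero hlt hw_nonneg' hw0).and_eventually
      hyw_nonneg).mono fun x ⟨hx, hnn⟩ ↦ ?_
    exact ((ENNReal.ofReal_lt_ofReal_iff_of_nonneg hnn).2 hx).ne

end WeightOnInterval

theorem stmt4_general (b : ℝ → ℝ → ℝ) (y : ℝ) (hy : 0 < y)
    (hb_nonneg : ∀ x y, 0 ≤ b x y)
    (hb_mass : ∫ x in Set.Ioo 0 y, x * b x y = y) :
    Nmom b 1 y = 0 ∧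
    (∀ m : ℝ, 1 < m → 0 < Nmom b m y) ∧
    (∀ m : ℝ, 0 ≤ m → m < 1 →
      ENNReal.ofReal (y ^ m) <
        ∫⁻ x in Set.Ioo 0 y, ENNReal.ofReal (x ^ m * b x y)) := by
  have hw0 : ∫ x in Ioo 0 y, x * b x y ≠ 0 := by rw [hb_mass]; exact hy.ne'
  have hw : IntegrableOn (fun x ↦ x * b x y) (Ioo 0 y) := Integrable.of_integral_ne_zero hw0
  have hw_nonneg : ∀ x ∈ Ioo 0 y, 0 ≤ x * b x y := fun x hx ↦ mul_nonneg hx.1.le (hb_nonneg x y)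
  have hmoment (m : ℝ) : ∀ x ∈ Ioo 0 y, x ^ m * b x y = x ^ (m - 1) * (x * b x y) :=
    fun x hx ↦ by rw [Real.rpow_sub_one hx.1.ne']; field_simp [hx.1.ne']
  have hy_pow (m : ℝ) : y ^ m = y ^ (m - 1) * ∫ x in Ioo 0 y, x * b x y := by
    rw [hb_mass, Real.rpow_sub_one hy.ne']; field_simp
  refine ⟨by simp [Nmom, nmom, hb_mass], fun m hm ↦ ?_, fun m _ hm ↦ ?_⟩
  · rw [Nmom, sub_pos, nmom, setIntegral_congr_fun measurableSet_Ioo (hmoment m), hy_pow m]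
    exact setIntegral_rpow_mul_lt_of_pos hw hw_nonneg hw0 (sub_pos.2 hm)
  · rw [setLIntegral_congr_fun measurableSet_Ioo fun x hx ↦ by rw [hmoment m x hx], hy_pow m]
    exact ofReal_mul_setIntegral_lt_setLIntegral_rpow_mul_of_neg hw hw_nonneg hw0 (by linarith)

/-- (i) `N_1(y) = 0`; (ii) `N_m(y) > 0` for `m > 1`;
(iii) `n_m(y) > y^m` as a value in `[0,∞]` for `0 ≤ m < 1`. -/
theorem stmt4 (b : ℝ → ℝ → ℝ) (y : ℝ) (hy : 0 < y)
    (hb_meas : Measurable (Function.uncurry b))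
    (hb_nonneg : ∀ x y, 0 ≤ b x y)
    (hb_supp : ∀ᵐ x ∂(volume : Measure ℝ), y < x → b x y = 0)
    (hb_mass : ∫ x in Set.Ioo 0 y, x * b x y = y) :
    Nmom b 1 y = 0 ∧
    (∀ m : ℝ, 1 < m → 0 < Nmom b m y) ∧
    (∀ m : ℝ, 0 ≤ m → m < 1 →
      ENNReal.ofReal (y ^ m) <
        ∫⁻ x in Set.Ioo 0 y, ENNReal.ofReal (x ^ m * b x y)) :=
  stmt4_general b y hy hb_nonneg hb_mass
end

section
/- Let a : (0,∞) → [0,∞) be measurable, let b be a daughter distribution function, and suppose there are l ≥ 0 and b₀ > 0 with n₀(x) ≤ b₀(1+x^l) for a.e. x > 0. Let m ≥ max{1, l} and let f : (0,∞) → [0,∞) be measurable with ∫₀^∞ a(y)(1+y^m) f(y) dy < ∞. Then ∫₀^∞ (1+x^m) (∫ₓ^∞ a(y) b(x,y) f(y) dy) dx = ∫₀^∞ a(y)(n_m(y)+n₀(y)) f(y) dy ≤ (1+2b₀) ∫₀^∞ a(y)(1+y^m) f(y) dy < ∞. -/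
open MeasureTheory Set Filter
open scoped ENNReal

/-- `n_m(y) = ∫₀^y x^m b(x,y) dx` as a value in `[0,∞]`. -/
noncomputable def nL (b : ℝ → ℝ → ℝ) (m y : ℝ) : ℝ≥0∞ :=
  ∫⁻ x in Set.Ioo 0 y, ENNReal.ofReal (x ^ m * b x y)

/-
Tonelli on the triangle `{0 < x < y}` turns the weighted norm of the gain term into
`∫ a(y) f(y) ∫₀^y (1 + x^m) b(x,y) dx dy = ∫ a(y) f(y) (n_m(y) + n₀(y)) dy`. Mass conservation
gives `n_m(y) ≤ y^{m-1} n₁(y) = y^m` for `m ≥ 1`, and `n₀(y) ≤ b₀(1 + y^l) ≤ 2b₀(1 + y^m)`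
for `l ≤ m`.
-/

theorem lintegral_Ioi_lintegral_Ioi_swap {g : ℝ → ℝ → ℝ≥0∞}
    (hg : Measurable (Function.uncurry g)) (c : ℝ) :
    ∫⁻ x in Ioi c, ∫⁻ y in Ioi x, g x y = ∫⁻ y in Ioi c, ∫⁻ x in Ioo c y, g x y := by
  set μ := volume.restrict (Ioi c)
  set G : ℝ → ℝ → ℝ≥0∞ := fun x y => {p : ℝ × ℝ | p.1 < p.2}.indicator (Function.uncurry g) (x, y)
  have hG : Measurable (Function.uncurry G) :=
    hg.indicator (measurableSet_lt measurable_fst measurable_snd)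
  have inner_fst : ∀ x ∈ Ioi c, ∫⁻ y in Ioi x, g x y = ∫⁻ y, G x y ∂μ := by
    intro x hx
    have : (fun y => G x y) = (Ioi x).indicator (g x) := by
      ext y; simp [G, indicator_apply]
    rw [this, lintegral_indicator measurableSet_Ioi, Measure.restrict_restrict measurableSet_Ioi,
      Ioi_inter_Ioi, max_eq_left (le_of_lt hx)]
  have inner_snd : ∀ y ∈ Ioi c, ∫⁻ x in Ioo c y, g x y = ∫⁻ x, G x y ∂μ := by
    intro y _
    have : (fun x => G x y) = (Iio y).indicator (fun x => g x y) := by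
      ext x; simp [G, indicator_apply]
    rw [this, lintegral_indicator measurableSet_Iio, Measure.restrict_restrict measurableSet_Iio,
      Iio_inter_Ioi]
  calc ∫⁻ x in Ioi c, ∫⁻ y in Ioi x, g x y = ∫⁻ x, ∫⁻ y, G x y ∂μ ∂μ :=
        setLIntegral_congr_fun measurableSet_Ioi inner_fst
    _ = ∫⁻ y, ∫⁻ x, G x y ∂μ ∂μ := lintegral_lintegral_swap hG.aemeasurable
    _ = ∫⁻ y in Ioi c, ∫⁻ x in Ioo c y, g x y :=
        (setLIntegral_congr_fun measurableSet_Ioi inner_snd).symm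

theorem nL_le_rpow {b : ℝ → ℝ → ℝ} {m y : ℝ} (hb : ∀ x, 0 ≤ b x y) (hm : 1 ≤ m) (hy : 0 < y)
    (hmass : ∫ x in Ioo 0 y, x * b x y = y) :
    nL b m y ≤ ENNReal.ofReal (y ^ m) := by
  have hint : IntegrableOn (fun x => x * b x y) (Ioo 0 y) := by
    by_contra h
    rw [integral_undef h] at hmass
    exact hy.ne hmass
  have hn1 : ∫⁻ x in Ioo 0 y, ENNReal.ofReal (x * b x y) = ENNReal.ofReal y := by
    rw [← ofReal_integral_eq_lintegral_ofReal hint, hmass]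
    filter_upwards [ae_restrict_mem measurableSet_Ioo] with x hx
    exact mul_nonneg hx.1.le (hb x)
  calc nL b m y
      ≤ ∫⁻ x in Ioo 0 y, ENNReal.ofReal (y ^ (m - 1)) * ENNReal.ofReal (x * b x y) := by
        refine setLIntegral_mono' measurableSet_Ioo fun x hx => ?_
        rw [← ENNReal.ofReal_mul (Real.rpow_nonneg hy.le _)]
        have hsplit : x ^ m * b x y = x ^ (m - 1) * (x * b x y) := by
          rw [← mul_assoc, ← Real.rpow_add_one hx.1.ne', sub_add_cancel]
        rw [hsplit]
        exact ENNReal.ofReal_le_ofReal <| mul_le_mul_of_nonneg_right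
          (Real.rpow_le_rpow hx.1.le hx.2.le (by linarith)) (mul_nonneg hx.1.le (hb x))
    _ = ENNReal.ofReal (y ^ (m - 1)) * ENNReal.ofReal y := by
        rw [lintegral_const_mul' _ _ ENNReal.ofReal_ne_top, hn1]
    _ = ENNReal.ofReal (y ^ m) := by
        rw [← ENNReal.ofReal_mul (Real.rpow_nonneg hy.le _), ← Real.rpow_add_one hy.ne',
          sub_add_cancel]

theorem nL_zero_add_nL {b : ℝ → ℝ → ℝ} {y : ℝ} (hb_meas : Measurable fun x => b x y)
    (hb : ∀ x, 0 ≤ b x y) (m : ℝ) :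
    nL b 0 y + nL b m y = ∫⁻ x in Ioo 0 y, ENNReal.ofReal ((1 + x ^ m) * b x y) := by
  simp only [nL, Real.rpow_zero, one_mul]
  rw [← lintegral_add_left hb_meas.ennreal_ofReal]
  refine setLIntegral_congr_fun measurableSet_Ioo fun x hx => ?_
  rw [← ENNReal.ofReal_add (hb x) (mul_nonneg (Real.rpow_nonneg hx.1.le m) (hb x)), add_mul,
    one_mul]

theorem Real.rpow_le_one_add_rpow {y l m : ℝ} (hy : 0 ≤ y) (hl : 0 ≤ l) (hlm : l ≤ m) :
    y ^ l ≤ 1 + y ^ m := by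
  rcases le_or_gt y 1 with hy1 | hy1
  · linarith [Real.rpow_le_one hy hy1 hl, Real.rpow_nonneg hy m]
  · linarith [Real.rpow_le_rpow_of_exponent_le hy1.le hlm]

theorem nL_add_nL_le {b : ℝ → ℝ → ℝ} {l b₀ m y : ℝ} (hb : ∀ x, 0 ≤ b x y) (hl : 0 ≤ l)
    (hb₀ : 0 ≤ b₀) (hm : max 1 l ≤ m) (hy : 0 < y) (hmass : ∫ x in Ioo 0 y, x * b x y = y)
    (hn0 : nL b 0 y ≤ ENNReal.ofReal (b₀ * (1 + y ^ l))) :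
    nL b m y + nL b 0 y ≤ ENNReal.ofReal (1 + 2 * b₀) * ENNReal.ofReal (1 + y ^ m) := by
  have hym := Real.rpow_nonneg hy.le m
  have hyl := Real.rpow_le_one_add_rpow hy.le hl ((le_max_right 1 l).trans hm)
  calc nL b m y + nL b 0 y
      ≤ ENNReal.ofReal (y ^ m) + ENNReal.ofReal (b₀ * (1 + y ^ l)) :=
        add_le_add (nL_le_rpow hb ((le_max_left 1 l).trans hm) hy hmass) hn0
    _ = ENNReal.ofReal (y ^ m + b₀ * (1 + y ^ l)) :=
        (ENNReal.ofReal_add hym (mul_nonneg hb₀ (by linarith [Real.rpow_nonneg hy.le l]))).symm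
    _ ≤ ENNReal.ofReal ((1 + 2 * b₀) * (1 + y ^ m)) := ENNReal.ofReal_le_ofReal (by nlinarith)
    _ = ENNReal.ofReal (1 + 2 * b₀) * ENNReal.ofReal (1 + y ^ m) :=
        ENNReal.ofReal_mul (by linarith)

theorem lintegral_one_add_rpow_mul_lintegral_Ioi_eq {a f : ℝ → ℝ} {b : ℝ → ℝ → ℝ}
    (ha_meas : Measurable a) (ha_nonneg : ∀ x, 0 ≤ a x) (hb_meas : Measurable (Function.uncurry b))
    (hb_nonneg : ∀ x y, 0 ≤ b x y) (hf_meas : Measurable f) (m : ℝ) :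
    ∫⁻ x in Ioi 0, ENNReal.ofReal (1 + x ^ m) * ∫⁻ y in Ioi x, ENNReal.ofReal (a y * b x y * f y) =
      ∫⁻ y in Ioi 0, ENNReal.ofReal (a y) * (nL b m y + nL b 0 y) * ENNReal.ofReal (f y) := by
  have hkernel : ∀ x y, ENNReal.ofReal (1 + x ^ m) * ENNReal.ofReal (a y * b x y * f y) =
      ENNReal.ofReal (a y) * ENNReal.ofReal (f y) * ENNReal.ofReal ((1 + x ^ m) * b x y) := by
    intro x y
    rw [ENNReal.ofReal_mul (mul_nonneg (ha_nonneg y) (hb_nonneg x y)),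
      ENNReal.ofReal_mul (ha_nonneg y), ENNReal.ofReal_mul' (hb_nonneg x y)]
    ring
  calc ∫⁻ x in Ioi 0, ENNReal.ofReal (1 + x ^ m) * ∫⁻ y in Ioi x, ENNReal.ofReal (a y * b x y * f y)
      = ∫⁻ x in Ioi 0, ∫⁻ y in Ioi x,
          ENNReal.ofReal (1 + x ^ m) * ENNReal.ofReal (a y * b x y * f y) :=
        lintegral_congr fun x => (lintegral_const_mul' _ _ ENNReal.ofReal_ne_top).symm
    _ = ∫⁻ y in Ioi 0, ∫⁻ x in Ioo 0 y,
          ENNReal.ofReal (1 + x ^ m) * ENNReal.ofReal (a y * b x y * f y) :=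
        lintegral_Ioi_lintegral_Ioi_swap (by fun_prop) 0
    _ = ∫⁻ y in Ioi 0, ENNReal.ofReal (a y) * (nL b m y + nL b 0 y) * ENNReal.ofReal (f y) := by
        refine lintegral_congr fun y => ?_
        have hby : Measurable fun x => b x y := hb_meas.comp (measurable_id.prodMk measurable_const)
        simp_rw [hkernel]
        rw [lintegral_const_mul' _ _ (by finiteness), ← nL_zero_add_nL hby (hb_nonneg · y)]
        ring

theorem stmt5_general (a : ℝ → ℝ) (b : ℝ → ℝ → ℝ) (l b₀ m : ℝ) (f : ℝ → ℝ)
    (ha_meas : Measurable a) (ha_nonneg : ∀ x, 0 ≤ a x)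
    (hb_meas : Measurable (Function.uncurry b))
    (hb_nonneg : ∀ x y, 0 ≤ b x y)
    (hb_mass : ∀ y : ℝ, 0 < y → ∫ x in Set.Ioo 0 y, x * b x y = y)
    (hl : 0 ≤ l) (hb₀ : 0 < b₀)
    (hn0 : ∀ᵐ x ∂(volume.restrict (Set.Ioi (0:ℝ))),
      nL b 0 x ≤ ENNReal.ofReal (b₀ * (1 + x ^ l)))
    (hm : max 1 l ≤ m)
    (hf_meas : Measurable f)
    (hf_int : ∫⁻ y in Set.Ioi (0:ℝ), ENNReal.ofReal (a y * (1 + y ^ m) * f y) < ∞) :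
    (∫⁻ x in Set.Ioi (0:ℝ), ENNReal.ofReal (1 + x ^ m) *
        ∫⁻ y in Set.Ioi x, ENNReal.ofReal (a y * b x y * f y))
      = (∫⁻ y in Set.Ioi (0:ℝ),
          ENNReal.ofReal (a y) * (nL b m y + nL b 0 y) * ENNReal.ofReal (f y)) ∧
    (∫⁻ y in Set.Ioi (0:ℝ),
        ENNReal.ofReal (a y) * (nL b m y + nL b 0 y) * ENNReal.ofReal (f y))
      ≤ ENNReal.ofReal (1 + 2 * b₀) *
          ∫⁻ y in Set.Ioi (0:ℝ), ENNReal.ofReal (a y * (1 + y ^ m) * f y) ∧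
    ENNReal.ofReal (1 + 2 * b₀) *
        (∫⁻ y in Set.Ioi (0:ℝ), ENNReal.ofReal (a y * (1 + y ^ m) * f y)) < ∞ := by
  refine ⟨lintegral_one_add_rpow_mul_lintegral_Ioi_eq ha_meas ha_nonneg hb_meas hb_nonneg hf_meas m,
    ?_, ENNReal.mul_lt_top ENNReal.ofReal_lt_top hf_int⟩
  rw [← lintegral_const_mul' _ _ ENNReal.ofReal_ne_top]
  refine lintegral_mono_ae ?_
  filter_upwards [hn0, ae_restrict_mem measurableSet_Ioi] with y hn0y hy
  calc ENNReal.ofReal (a y) * (nL b m y + nL b 0 y) * ENNReal.ofReal (f y)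
      ≤ ENNReal.ofReal (a y) * (ENNReal.ofReal (1 + 2 * b₀) * ENNReal.ofReal (1 + y ^ m)) *
          ENNReal.ofReal (f y) := by
        gcongr
        exact nL_add_nL_le (hb_nonneg · y) hl hb₀.le hm hy (hb_mass y hy) hn0y
    _ = ENNReal.ofReal (1 + 2 * b₀) * ENNReal.ofReal (a y * (1 + y ^ m) * f y) := by
        have hym : 0 ≤ 1 + y ^ m := by linarith [Real.rpow_nonneg (le_of_lt hy) m]
        rw [ENNReal.ofReal_mul (mul_nonneg (ha_nonneg y) hym), ENNReal.ofReal_mul (ha_nonneg y)]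
        ring

/-- the weighted `L¹((1+x^m)dx)` norm of the fragmentation gain operator:
`∫₀^∞ (1+x^m) (∫ₓ^∞ a(y) b(x,y) f(y) dy) dx = ∫₀^∞ a(y)(n_m(y)+n₀(y)) f(y) dy
  ≤ (1+2b₀) ∫₀^∞ a(y)(1+y^m) f(y) dy < ∞`. -/
theorem stmt5 (a : ℝ → ℝ) (b : ℝ → ℝ → ℝ) (l b₀ m : ℝ) (f : ℝ → ℝ)
    (ha_meas : Measurable a) (ha_nonneg : ∀ x, 0 ≤ a x)
    (hb_meas : Measurable (Function.uncurry b))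
    (hb_nonneg : ∀ x y, 0 ≤ b x y)
    (hb_supp : ∀ y : ℝ, 0 < y → ∀ᵐ x ∂(volume : Measure ℝ), y < x → b x y = 0)
    (hb_mass : ∀ y : ℝ, 0 < y → ∫ x in Set.Ioo 0 y, x * b x y = y)
    (hl : 0 ≤ l) (hb₀ : 0 < b₀)
    (hn0 : ∀ᵐ x ∂(volume.restrict (Set.Ioi (0:ℝ))),
      nL b 0 x ≤ ENNReal.ofReal (b₀ * (1 + x ^ l)))
    (hm : max 1 l ≤ m)
    (hf_meas : Measurable f) (hf_nonneg : ∀ x, 0 ≤ f x)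
    (hf_int : ∫⁻ y in Set.Ioi (0:ℝ), ENNReal.ofReal (a y * (1 + y ^ m) * f y) < ∞) :
    (∫⁻ x in Set.Ioi (0:ℝ), ENNReal.ofReal (1 + x ^ m) *
        ∫⁻ y in Set.Ioi x, ENNReal.ofReal (a y * b x y * f y))
      = (∫⁻ y in Set.Ioi (0:ℝ),
          ENNReal.ofReal (a y) * (nL b m y + nL b 0 y) * ENNReal.ofReal (f y)) ∧
    (∫⁻ y in Set.Ioi (0:ℝ),
        ENNReal.ofReal (a y) * (nL b m y + nL b 0 y) * ENNReal.ofReal (f y))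
      ≤ ENNReal.ofReal (1 + 2 * b₀) *
          ∫⁻ y in Set.Ioi (0:ℝ), ENNReal.ofReal (a y * (1 + y ^ m) * f y) ∧
    ENNReal.ofReal (1 + 2 * b₀) *
        (∫⁻ y in Set.Ioi (0:ℝ), ENNReal.ofReal (a y * (1 + y ^ m) * f y)) < ∞ :=
  stmt5_general a b l b₀ m f ha_meas ha_nonneg hb_meas hb_nonneg hb_mass hl hb₀ hn0 hm hf_meas
    hf_int
end

section
/- (Miyadera estimate for the fragmentation semigroup.) Let a : (0,∞) → [0,∞) be measurable, let b be a daughter distribution function, and suppose there are l ≥ 0 and b₀ > 0 with n₀(x) ≤ b₀(1+x^l) for a.e. x > 0. Let m ≥ max{1, l}, and suppose there exist r > 0, c' ∈ (0,1) and ζ > 0 such that: (i) n_m(x) ≤ c' x^m for a.e. x ≥ r; (ii) b₀(1+x^l) ≤ ((1−c')/4)(1+x^m) for all x ≥ r; (iii) a(x) b₀(1+x^l) ≤ ((1−c')/4)(a(x)+ζ) for a.e. x ∈ (0,r). Then for every measurable f : (0,∞) → [0,∞) with ∫₀^∞ (1+y^m) f(y) dy < ∞, one has ∫₀^∞ ( ∫₀^∞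 (1+x^m) ( ∫ₓ^∞ a(y) b(x,y) e^{−(a(y)+ζ)t} f(y) dy ) dx ) dt ≤ ((1+c')/2) ∫₀^∞ (1+y^m) f(y) dy, and (1+c')/2 < 1. -/
open MeasureTheory Set Filter
open scoped ENNReal

private lemma lint_exp {k : ℝ} (hk : 0 < k) :
    ∫⁻ t in Set.Ioi (0:ℝ), ENNReal.ofReal (Real.exp (-k * t)) = ENNReal.ofReal k⁻¹ := by
  rw [← ofReal_integral_eq_lintegral_ofReal (exp_neg_integrableOn_Ioi 0 hk)
      (Filter.Eventually.of_forall fun t => (Real.exp_pos _).le)]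
  congr 1
  have h := MeasureTheory.integral_comp_mul_left_Ioi (fun u => Real.exp (-u)) 0 hk
  simp only [mul_zero, integral_exp_neg_Ioi_zero, smul_eq_mul, mul_one, neg_mul] at h ⊢
  exact h

/-- The full integrand. -/
private noncomputable def FF (a : ℝ → ℝ) (b : ℝ → ℝ → ℝ) (f : ℝ → ℝ) (m ζ : ℝ)
    (t x y : ℝ) : ℝ≥0∞ :=
  ENNReal.ofReal (1 + x ^ m) * (ENNReal.ofReal (b x y) *
    (ENNReal.ofReal (Real.exp (-(a y + ζ) * t)) * ENNReal.ofReal (a y * f y)))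

private lemma FF_meas {a : ℝ → ℝ} {b : ℝ → ℝ → ℝ} {f : ℝ → ℝ} {m ζ : ℝ}
    (ha : Measurable a) (hb : Measurable (Function.uncurry b)) (hf : Measurable f) :
    Measurable (fun p : ℝ × ℝ × ℝ => FF a b f m ζ p.1 p.2.1 p.2.2) := by
  have hb' : Measurable fun p : ℝ × ℝ × ℝ => b p.2.1 p.2.2 := hb.comp measurable_snd
  unfold FF
  fun_prop

/-- the Miyadera estimate for the fragmentation semigroup:
`∫₀^∞ ‖B G_{A-ζ}(t) f‖_{[0,m]} dt ≤ ((1+c')/2) ‖f‖_{[0,m]}` with `(1+c')/2 < 1`. -/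
theorem stmt7 (a : ℝ → ℝ) (b : ℝ → ℝ → ℝ) (l b₀ m r c' ζ : ℝ) (f : ℝ → ℝ)
    (ha_meas : Measurable a) (ha_nonneg : ∀ x, 0 ≤ a x)
    (hb_meas : Measurable (Function.uncurry b))
    (hb_nonneg : ∀ x y, 0 ≤ b x y)
    (hb_supp : ∀ y : ℝ, 0 < y → ∀ᵐ x ∂(volume : Measure ℝ), y < x → b x y = 0)
    (hb_mass : ∀ y : ℝ, 0 < y → ∫ x in Set.Ioo 0 y, x * b x y = y)
    (hl : 0 ≤ l) (hb₀ : 0 < b₀)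
    (hn0 : ∀ᵐ x ∂(volume.restrict (Set.Ioi (0:ℝ))),
      nL b 0 x ≤ ENNReal.ofReal (b₀ * (1 + x ^ l)))
    (hm : max 1 l ≤ m)
    (hr : 0 < r) (hc' : c' ∈ Set.Ioo (0:ℝ) 1) (hζ : 0 < ζ)
    (h1 : ∀ᵐ x ∂(volume.restrict (Set.Ici r)),
      nL b m x ≤ ENNReal.ofReal (c' * x ^ m))
    (h2 : ∀ x : ℝ, r ≤ x → b₀ * (1 + x ^ l) ≤ (1 - c') / 4 * (1 + x ^ m))
    (h3 : ∀ᵐ x ∂(volume.restrict (Set.Ioo (0:ℝ) r)),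
      a x * (b₀ * (1 + x ^ l)) ≤ (1 - c') / 4 * (a x + ζ))
    (hf_meas : Measurable f) (hf_nonneg : ∀ x, 0 ≤ f x)
    (hf_int : ∫⁻ y in Set.Ioi (0:ℝ), ENNReal.ofReal ((1 + y ^ m) * f y) < ∞) :
    (∫⁻ t in Set.Ioi (0:ℝ), ∫⁻ x in Set.Ioi (0:ℝ), ENNReal.ofReal (1 + x ^ m) *
        ∫⁻ y in Set.Ioi x,
          ENNReal.ofReal (a y * b x y * Real.exp (-(a y + ζ) * t) * f y))
      ≤ ENNReal.ofReal ((1 + c') / 2) *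
          ∫⁻ y in Set.Ioi (0:ℝ), ENNReal.ofReal ((1 + y ^ m) * f y) ∧
    (1 + c') / 2 < 1 := by
  obtain ⟨hc0, hc1⟩ := hc'
  have hm1 : (1:ℝ) ≤ m := le_trans (le_max_left 1 l) hm
  have hm0 : (0:ℝ) ≤ m := by linarith
  refine ⟨?_, by linarith⟩
  have hpt0 : True := trivial
  have hFm := FF_meas (m := m) (ζ := ζ) ha_meas hb_meas hf_meas
  -- a.e. y ≠ c
  have hne : ∀ c : ℝ, ∀ᵐ y ∂(volume : Measure ℝ), y ≠ c := by
    intro c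
    refine ae_iff.mpr ?_
    simp only [ne_eq, not_not, setOf_eq_eq_singleton]
    exact measure_singleton c
  -- joint null support statement
  have hsec : ∀ᵐ x ∂(volume : Measure ℝ), ∀ᵐ y ∂(volume : Measure ℝ),
      0 < y → y < x → b x y = 0 := by
    have hq : ∀ y : ℝ, ∀ᵐ x ∂(volume : Measure ℝ), 0 < y → y < x → b x y = 0 := by
      intro y
      by_cases hy : 0 < y
      · filter_upwards [hb_supp y hy] with x hx _ h2'; exact hx h2'
      · exact Filter.Eventually.of_forall fun x h => absurd h hy
    have hmp : MeasurableSet {q : ℝ × ℝ | 0 < q.1 → q.1 < q.2 → b q.2 q.1 = 0} := by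
      have : {q : ℝ × ℝ | 0 < q.1 → q.1 < q.2 → b q.2 q.1 = 0}
          = ({q : ℝ × ℝ | 0 < q.1} ∩ ({q : ℝ × ℝ | q.1 < q.2} ∩
              {q : ℝ × ℝ | b q.2 q.1 ≠ 0}))ᶜ := by
        ext q; by_cases h : b q.2 q.1 = 0 <;> simp [h] <;> tauto
      rw [this]
      refine (MeasurableSet.inter ?_ (MeasurableSet.inter ?_ ?_)).compl
      · exact measurableSet_lt measurable_const measurable_fst
      · exact measurableSet_lt measurable_fst measurable_snd
      · exact ((hb_meas.comp (measurable_snd.prodMk measurable_fst))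
          (measurableSet_singleton 0)).compl
    have hprod : ∀ᵐ q ∂((volume : Measure ℝ).prod volume),
        (0 < q.1 → q.1 < q.2 → b q.2 q.1 = 0) :=
      (Measure.ae_prod_iff_ae_ae hmp).mpr (Filter.Eventually.of_forall hq)
    have hswap : ∀ᵐ p ∂((volume : Measure ℝ).prod volume),
        (0 < p.2 → p.2 < p.1 → b p.1 p.2 = 0) :=
      (Measure.measurePreserving_swap).quasiMeasurePreserving.ae hprod
    exact Measure.ae_ae_of_ae_prod hswap
  -- Step 1: rewrite LHS using FF
  have hpt : ∀ t x y : ℝ, ENNReal.ofReal (a y * b x y * Real.exp (-(a y + ζ) * t) * f y)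
      = ENNReal.ofReal (b x y) * (ENNReal.ofReal (Real.exp (-(a y + ζ) * t)) *
          ENNReal.ofReal (a y * f y)) := by
    intro t x y
    rw [← ENNReal.ofReal_mul (Real.exp_pos _).le, ← ENNReal.ofReal_mul (hb_nonneg x y)]
    congr 1; ring
  have step1 : (∫⁻ t in Set.Ioi (0:ℝ), ∫⁻ x in Set.Ioi (0:ℝ), ENNReal.ofReal (1 + x ^ m) *
        ∫⁻ y in Set.Ioi x, ENNReal.ofReal (a y * b x y * Real.exp (-(a y + ζ) * t) * f y))
      = ∫⁻ t in Set.Ioi (0:ℝ), ∫⁻ x in Set.Ioi (0:ℝ), ∫⁻ y in Set.Ioi x, FF a b f m ζ t x y := by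
    refine lintegral_congr fun t => lintegral_congr fun x => ?_
    simp_rw [hpt t x]
    exact (lintegral_const_mul' _ _ ENNReal.ofReal_ne_top).symm
  -- Step 2: replace Ioi x by Ioi 0 in the inner integral
  have step2 : ∀ t : ℝ, (∫⁻ x in Set.Ioi (0:ℝ), ∫⁻ y in Set.Ioi x, FF a b f m ζ t x y)
      = ∫⁻ x in Set.Ioi (0:ℝ), ∫⁻ y in Set.Ioi (0:ℝ), FF a b f m ζ t x y := by
    intro t
    refine lintegral_congr_ae ?_
    filter_upwards [ae_restrict_of_ae hsec, ae_restrict_mem measurableSet_Ioi] with x hxsec hx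
    have hx0 : (0:ℝ) < x := hx
    rw [← Ioc_union_Ioi_eq_Ioi hx0.le,
      lintegral_union measurableSet_Ioi Ioc_disjoint_Ioi_same]
    have hzero : (∫⁻ y in Set.Ioc (0:ℝ) x, FF a b f m ζ t x y) = 0 := by
      have hz : ∀ᵐ y ∂(volume.restrict (Set.Ioc (0:ℝ) x)), FF a b f m ζ t x y = 0 := by
        filter_upwards [ae_restrict_of_ae hxsec, ae_restrict_mem measurableSet_Ioc,
          ae_restrict_of_ae (hne x)] with y h1y h2y h3y
        have hyx : y < x := lt_of_le_of_ne h2y.2 h3y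
        have hb0 : b x y = 0 := h1y h2y.1 hyx
        simp [FF, hb0]
      rw [lintegral_congr_ae hz, lintegral_zero]
    rw [hzero, zero_add]
  -- Step 3: Tonelli swaps to integrate in t first
  have hswap1 : (∫⁻ t in Set.Ioi (0:ℝ), ∫⁻ x in Set.Ioi (0:ℝ), ∫⁻ y in Set.Ioi (0:ℝ), FF a b f m ζ t x y)
      = ∫⁻ x in Set.Ioi (0:ℝ), ∫⁻ t in Set.Ioi (0:ℝ), ∫⁻ y in Set.Ioi (0:ℝ), FF a b f m ζ t x y := by
    refine lintegral_lintegral_swap ?_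
    refine Measurable.aemeasurable ?_
    exact (Measurable.lintegral_prod_right' (ν := (volume : Measure ℝ).restrict (Set.Ioi 0))
      (hFm.comp ((measurable_fst.fst).prodMk ((measurable_fst.snd).prodMk measurable_snd))))
  have hswap2 : ∀ x : ℝ, (∫⁻ t in Set.Ioi (0:ℝ), ∫⁻ y in Set.Ioi (0:ℝ), FF a b f m ζ t x y)
      = ∫⁻ y in Set.Ioi (0:ℝ), ∫⁻ t in Set.Ioi (0:ℝ), FF a b f m ζ t x y := by
    intro x
    refine lintegral_lintegral_swap ?_
    exact (hFm.comp (measurable_fst.prodMk (measurable_const.prodMk measurable_snd))).aemeasurable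
  -- Step 4: compute the t-integral
  have hkpos : ∀ y : ℝ, 0 < a y + ζ := fun y => by linarith [ha_nonneg y]
  have step4 : ∀ x y : ℝ, (∫⁻ t in Set.Ioi (0:ℝ), FF a b f m ζ t x y)
      = (ENNReal.ofReal (1 + x ^ m) * ENNReal.ofReal (b x y)) *
          (ENNReal.ofReal (a y * f y) * ENNReal.ofReal ((a y + ζ)⁻¹)) := by
    intro x y
    have harr : ∀ t : ℝ, FF a b f m ζ t x y =
        (ENNReal.ofReal (1 + x ^ m) * ENNReal.ofReal (b x y) * ENNReal.ofReal (a y * f y)) *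
          ENNReal.ofReal (Real.exp (-(a y + ζ) * t)) := by
      intro t; unfold FF; ring
    simp_rw [harr]
    rw [lintegral_const_mul' _ _ (ENNReal.mul_ne_top (ENNReal.mul_ne_top ENNReal.ofReal_ne_top ENNReal.ofReal_ne_top) ENNReal.ofReal_ne_top), lint_exp (hkpos y)]
    ring
  -- Step 5: swap x and y
  have hswap3 : (∫⁻ x in Set.Ioi (0:ℝ), ∫⁻ y in Set.Ioi (0:ℝ), (ENNReal.ofReal (1 + x ^ m) * ENNReal.ofReal (b x y)) *
        (ENNReal.ofReal (a y * f y) * ENNReal.ofReal ((a y + ζ)⁻¹)))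
      = ∫⁻ y in Set.Ioi (0:ℝ), ∫⁻ x in Set.Ioi (0:ℝ), (ENNReal.ofReal (1 + x ^ m) * ENNReal.ofReal (b x y)) *
        (ENNReal.ofReal (a y * f y) * ENNReal.ofReal ((a y + ζ)⁻¹)) := by
    refine lintegral_lintegral_swap ?_
    refine Measurable.aemeasurable ?_
    have hb' : Measurable fun p : ℝ × ℝ => b p.1 p.2 := hb_meas
    fun_prop
  have step5 : ∀ y : ℝ, (∫⁻ x in Set.Ioi (0:ℝ), (ENNReal.ofReal (1 + x ^ m) * ENNReal.ofReal (b x y)) *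
        (ENNReal.ofReal (a y * f y) * ENNReal.ofReal ((a y + ζ)⁻¹)))
      = (∫⁻ x in Set.Ioi (0:ℝ), ENNReal.ofReal (1 + x ^ m) * ENNReal.ofReal (b x y)) *
          (ENNReal.ofReal (a y * f y) * ENNReal.ofReal ((a y + ζ)⁻¹)) :=
    fun y => lintegral_mul_const' _ _
      (ENNReal.mul_ne_top ENNReal.ofReal_ne_top ENNReal.ofReal_ne_top)
  -- Step 6: identify the x-integral with nL
  have step6 : ∀ y : ℝ, 0 < y →
      (∫⁻ x in Set.Ioi (0:ℝ), ENNReal.ofReal (1 + x ^ m) * ENNReal.ofReal (b x y))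
        = nL b 0 y + nL b m y := by
    intro y hy
    rw [← Ioo_union_Ici_eq_Ioi hy,
      lintegral_union measurableSet_Ici
        ((Iio_disjoint_Ici le_rfl).mono_left Ioo_subset_Iio_self)]
    have hzero : (∫⁻ x in Set.Ici y, ENNReal.ofReal (1 + x ^ m) * ENNReal.ofReal (b x y)) = 0 := by
      have hz : ∀ᵐ x ∂(volume.restrict (Set.Ici y)),
          ENNReal.ofReal (1 + x ^ m) * ENNReal.ofReal (b x y) = 0 := by
        filter_upwards [ae_restrict_of_ae (hb_supp y hy), ae_restrict_mem measurableSet_Ici,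
          ae_restrict_of_ae (hne y)] with x h1x h2x h3x
        have : y < x := lt_of_le_of_ne h2x (Ne.symm h3x)
        rw [h1x this]; simp
      rw [lintegral_congr_ae hz, lintegral_zero]
    rw [hzero, add_zero]
    have hcong : ∀ᵐ x ∂(volume.restrict (Set.Ioo (0:ℝ) y)),
        ENNReal.ofReal (1 + x ^ m) * ENNReal.ofReal (b x y)
          = ENNReal.ofReal (x ^ (0:ℝ) * b x y) + ENNReal.ofReal (x ^ m * b x y) := by
      filter_upwards [ae_restrict_mem measurableSet_Ioo] with x hx
      have hx0 : (0:ℝ) ≤ x := hx.1.le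
      have hxm : (0:ℝ) ≤ x ^ m := Real.rpow_nonneg hx0 m
      rw [← ENNReal.ofReal_mul (by linarith : (0:ℝ) ≤ 1 + x ^ m),
        ← ENNReal.ofReal_add (by rw [Real.rpow_zero, one_mul]; exact hb_nonneg x y)
          (mul_nonneg hxm (hb_nonneg x y))]
      congr 1
      rw [Real.rpow_zero]; ring
    rw [lintegral_congr_ae hcong]
    have hbm : Measurable fun x : ℝ => b x y :=
      hb_meas.comp (measurable_id.prodMk measurable_const)
    rw [lintegral_add_left (by fun_prop)]
    rfl
  -- auxiliary: nL b m y ≤ y^m * nL b 0 y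
  have nm_le : ∀ y : ℝ, 0 < y → nL b m y ≤ ENNReal.ofReal (y ^ m) * nL b 0 y := by
    intro y hy
    unfold nL
    rw [← lintegral_const_mul' _ _ ENNReal.ofReal_ne_top]
    refine lintegral_mono_ae ?_
    filter_upwards [ae_restrict_mem measurableSet_Ioo] with x hx
    rw [← ENNReal.ofReal_mul (Real.rpow_nonneg hy.le m)]
    apply ENNReal.ofReal_le_ofReal
    rw [Real.rpow_zero, one_mul]
    exact mul_le_mul_of_nonneg_right (Real.rpow_le_rpow hx.1.le hx.2.le hm0) (hb_nonneg x y)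
  -- Step 7: the pointwise bound
  have key : ∀ᵐ y ∂(volume.restrict (Set.Ioi (0:ℝ))), (nL b 0 y + nL b m y) *
      (ENNReal.ofReal (a y * f y) * ENNReal.ofReal ((a y + ζ)⁻¹))
        ≤ ENNReal.ofReal ((1 + c') / 2) * ENNReal.ofReal ((1 + y ^ m) * f y) := by
    have hn0' := (ae_restrict_iff' measurableSet_Ioi).mp hn0
    have h1' := (ae_restrict_iff' measurableSet_Ici).mp h1
    have h3' := (ae_restrict_iff' measurableSet_Ioo).mp h3
    filter_upwards [ae_restrict_of_ae hn0', ae_restrict_of_ae h1', ae_restrict_of_ae h3',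
      ae_restrict_mem measurableSet_Ioi] with y hy0b hy1 hy3 hy
    have hy0 : (0:ℝ) < y := hy
    have hk : (0:ℝ) < a y + ζ := hkpos y
    have hym0 : (0:ℝ) ≤ y ^ m := Real.rpow_nonneg hy0.le m
    have hyl0 : (0:ℝ) ≤ y ^ l := Real.rpow_nonneg hy0.le l
    have hq0 : (0:ℝ) ≤ a y * (a y + ζ)⁻¹ := mul_nonneg (ha_nonneg y) (inv_nonneg.mpr hk.le)
    -- main estimate without the f factor
    have main : (nL b 0 y + nL b m y) * ENNReal.ofReal (a y * (a y + ζ)⁻¹)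
        ≤ ENNReal.ofReal ((1 + c') / 2 * (1 + y ^ m)) := by
      by_cases hyr : r ≤ y
      · have hb1 : nL b 0 y ≤ ENNReal.ofReal ((1 - c') / 4 * (1 + y ^ m)) :=
          le_trans (hy0b hy) (ENNReal.ofReal_le_ofReal (h2 y hyr))
        have hb2 : nL b m y ≤ ENNReal.ofReal (c' * (1 + y ^ m)) :=
          le_trans (hy1 hyr) (ENNReal.ofReal_le_ofReal (by nlinarith))
        have hqle : ENNReal.ofReal (a y * (a y + ζ)⁻¹) ≤ 1 := by
          rw [← ENNReal.ofReal_one]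
          apply ENNReal.ofReal_le_ofReal
          rw [← div_eq_mul_inv, div_le_one hk]
          linarith
        calc (nL b 0 y + nL b m y) * ENNReal.ofReal (a y * (a y + ζ)⁻¹)
            ≤ (nL b 0 y + nL b m y) * 1 := mul_le_mul_right hqle _
          _ = nL b 0 y + nL b m y := mul_one _
          _ ≤ ENNReal.ofReal ((1 - c') / 4 * (1 + y ^ m)) + ENNReal.ofReal (c' * (1 + y ^ m)) :=
              add_le_add hb1 hb2
          _ = ENNReal.ofReal ((1 - c') / 4 * (1 + y ^ m) + c' * (1 + y ^ m)) :=
              (ENNReal.ofReal_add (by nlinarith) (by nlinarith)).symm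
          _ ≤ ENNReal.ofReal ((1 + c') / 2 * (1 + y ^ m)) :=
              ENNReal.ofReal_le_ofReal (by nlinarith)
      · push_neg at hyr
        have h3y := hy3 ⟨hy0, hyr⟩
        have hqb : a y * (a y + ζ)⁻¹ * (b₀ * (1 + y ^ l)) ≤ (1 - c') / 4 := by
          have heq : a y * (a y + ζ)⁻¹ * (b₀ * (1 + y ^ l))
              = (a y * (b₀ * (1 + y ^ l))) / (a y + ζ) := by
            rw [div_eq_mul_inv]; ring
          rw [heq, div_le_iff₀ hk]
          exact h3y
        have e1 : nL b 0 y * ENNReal.ofReal (a y * (a y + ζ)⁻¹)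
            ≤ ENNReal.ofReal ((1 - c') / 4) := by
          calc nL b 0 y * ENNReal.ofReal (a y * (a y + ζ)⁻¹)
              ≤ ENNReal.ofReal (b₀ * (1 + y ^ l)) * ENNReal.ofReal (a y * (a y + ζ)⁻¹) :=
                mul_le_mul_left (hy0b hy) _
            _ = ENNReal.ofReal (a y * (a y + ζ)⁻¹ * (b₀ * (1 + y ^ l))) := by
                rw [← ENNReal.ofReal_mul (by positivity)]; congr 1; ring
            _ ≤ ENNReal.ofReal ((1 - c') / 4) := ENNReal.ofReal_le_ofReal hqb
        have e2 : nL b m y * ENNReal.ofReal (a y * (a y + ζ)⁻¹)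
            ≤ ENNReal.ofReal (y ^ m * ((1 - c') / 4)) := by
          calc nL b m y * ENNReal.ofReal (a y * (a y + ζ)⁻¹)
              ≤ (ENNReal.ofReal (y ^ m) * nL b 0 y) * ENNReal.ofReal (a y * (a y + ζ)⁻¹) :=
                mul_le_mul_left (nm_le y hy0) _
            _ = ENNReal.ofReal (y ^ m) * (nL b 0 y * ENNReal.ofReal (a y * (a y + ζ)⁻¹)) := by
                ring
            _ ≤ ENNReal.ofReal (y ^ m) * ENNReal.ofReal ((1 - c') / 4) :=
                mul_le_mul_right e1 _
            _ = ENNReal.ofReal (y ^ m * ((1 - c') / 4)) := (ENNReal.ofReal_mul hym0).symm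
        calc (nL b 0 y + nL b m y) * ENNReal.ofReal (a y * (a y + ζ)⁻¹)
            = nL b 0 y * ENNReal.ofReal (a y * (a y + ζ)⁻¹)
              + nL b m y * ENNReal.ofReal (a y * (a y + ζ)⁻¹) := by ring
          _ ≤ ENNReal.ofReal ((1 - c') / 4) + ENNReal.ofReal (y ^ m * ((1 - c') / 4)) :=
              add_le_add e1 e2
          _ = ENNReal.ofReal ((1 - c') / 4 + y ^ m * ((1 - c') / 4)) :=
              (ENNReal.ofReal_add (by nlinarith) (by nlinarith)).symm
          _ ≤ ENNReal.ofReal ((1 + c') / 2 * (1 + y ^ m)) :=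
              ENNReal.ofReal_le_ofReal (by nlinarith)
    -- put the f factor back
    have hAfk : ENNReal.ofReal (a y * f y) * ENNReal.ofReal ((a y + ζ)⁻¹)
        = ENNReal.ofReal (a y * (a y + ζ)⁻¹) * ENNReal.ofReal (f y) := by
      rw [← ENNReal.ofReal_mul (mul_nonneg (ha_nonneg y) (hf_nonneg y)),
        ← ENNReal.ofReal_mul hq0]
      congr 1; ring
    have hRHS : ENNReal.ofReal ((1 + c') / 2) * ENNReal.ofReal ((1 + y ^ m) * f y)
        = ENNReal.ofReal ((1 + c') / 2 * (1 + y ^ m)) * ENNReal.ofReal (f y) := by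
      rw [← ENNReal.ofReal_mul (by linarith : (0:ℝ) ≤ (1 + c') / 2),
        ← ENNReal.ofReal_mul (by nlinarith : (0:ℝ) ≤ (1 + c') / 2 * (1 + y ^ m))]
      congr 1; ring
    rw [hAfk, hRHS, ← mul_assoc]
    exact mul_le_mul_left main _
  -- Assemble everything
  calc (∫⁻ t in Set.Ioi (0:ℝ), ∫⁻ x in Set.Ioi (0:ℝ), ENNReal.ofReal (1 + x ^ m) *
        ∫⁻ y in Set.Ioi x, ENNReal.ofReal (a y * b x y * Real.exp (-(a y + ζ) * t) * f y))
      = ∫⁻ t in Set.Ioi (0:ℝ), ∫⁻ x in Set.Ioi (0:ℝ), ∫⁻ y in Set.Ioi (0:ℝ), FF a b f m ζ t x y := by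
        rw [step1]; exact lintegral_congr fun t => step2 t
    _ = ∫⁻ x in Set.Ioi (0:ℝ), ∫⁻ t in Set.Ioi (0:ℝ), ∫⁻ y in Set.Ioi (0:ℝ), FF a b f m ζ t x y := hswap1
    _ = ∫⁻ x in Set.Ioi (0:ℝ), ∫⁻ y in Set.Ioi (0:ℝ), ∫⁻ t in Set.Ioi (0:ℝ), FF a b f m ζ t x y :=
        lintegral_congr fun x => hswap2 x
    _ = ∫⁻ x in Set.Ioi (0:ℝ), ∫⁻ y in Set.Ioi (0:ℝ), (ENNReal.ofReal (1 + x ^ m) * ENNReal.ofReal (b x y)) *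
          (ENNReal.ofReal (a y * f y) * ENNReal.ofReal ((a y + ζ)⁻¹)) :=
        lintegral_congr fun x => lintegral_congr fun y => step4 x y
    _ = ∫⁻ y in Set.Ioi (0:ℝ), ∫⁻ x in Set.Ioi (0:ℝ), (ENNReal.ofReal (1 + x ^ m) * ENNReal.ofReal (b x y)) *
          (ENNReal.ofReal (a y * f y) * ENNReal.ofReal ((a y + ζ)⁻¹)) := hswap3
    _ = ∫⁻ y in Set.Ioi (0:ℝ), (nL b 0 y + nL b m y) *
          (ENNReal.ofReal (a y * f y) * ENNReal.ofReal ((a y + ζ)⁻¹)) := by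
        refine lintegral_congr_ae ?_
        filter_upwards [ae_restrict_mem measurableSet_Ioi] with y hy
        rw [step5 y, step6 y hy]
    _ ≤ ∫⁻ y in Set.Ioi (0:ℝ), ENNReal.ofReal ((1 + c') / 2) * ENNReal.ofReal ((1 + y ^ m) * f y) :=
        lintegral_mono_ae key
    _ = ENNReal.ofReal ((1 + c') / 2) * ∫⁻ y in Set.Ioi (0:ℝ), ENNReal.ofReal ((1 + y ^ m) * f y) :=
        lintegral_const_mul' _ _ ENNReal.ofReal_ne_top
end

section
/- Let a : (0,∞) → [0,∞) be measurable, K > 0, α ∈ (0,1), and let k be a nonnegative measurable symmetric kernel on (0,∞)² with k(x,y) ≤ K ((1+a(x))^α + (1+a(y))^α) for all x, y > 0. Then for each i > 1 there exists a constant K_i > 0, depending only on i and K, such that for every measurable f : (0,∞) → [0,∞), ½ ∫₀^∞∫₀^∞ ((x+y)^i − x^i − y^i) k(x,y) f(x) f(y) dx dy ≤ K_i ( (∫₀^∞ x^{i−1}(1+a(x))^α f(x) dx)(∫₀^∞ y f(y) dy) + (∫₀^∞ x^{i−1} f(x) dx)(∫₀^∞ y(1+a(y))^α f(y) dy) ).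 -/
open MeasureTheory Set Filter
open scoped ENNReal

private lemma stmt12_key1 (i : ℝ) (hi : 1 < i) (x y : ℝ) (hy : 0 < y) (hyx : y ≤ x) :
    (x + y) ^ i - x ^ i ≤ (2 ^ i - 1) * (x ^ (i - 1) * y) := by
  have hx : 0 < x := lt_of_lt_of_le hy hyx
  set t := y / x with ht
  have ht0 : 0 ≤ t := by positivity
  have ht1 : t ≤ 1 := (div_le_one hx).mpr hyx
  have hconv0 := (convexOn_rpow hi.le).2 (Set.mem_Ici.mpr hx.le)
    (Set.mem_Ici.mpr (by linarith : (0:ℝ) ≤ 2 * x)) (by linarith : 0 ≤ 1 - t) ht0 (by ring)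
  have hconv : ((1 - t) * x + t * (2 * x)) ^ i ≤ (1 - t) * x ^ i + t * (2 * x) ^ i := hconv0
  have htx : t * x = y := by rw [ht]; exact div_mul_cancel₀ y hx.ne'
  have hxy : (1 - t) * x + t * (2 * x) = x + y := by linear_combination htx
  rw [hxy] at hconv
  have h2x : (2 * x) ^ i = 2 ^ i * x ^ i := Real.mul_rpow (by norm_num) hx.le
  rw [h2x] at hconv
  have hxi : x ^ i = x ^ (i - 1) * x := by
    rw [← Real.rpow_add_one hx.ne' (i - 1), sub_add_cancel]
  have hxiy : x ^ (i - 1) * y = t * x ^ i := by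
    rw [hxi]; linear_combination (-(x ^ (i - 1))) * htx
  have hexp : (1 - t) * x ^ i + t * (2 ^ i * x ^ i) = x ^ i + (2 ^ i - 1) * (t * x ^ i) := by
    ring
  rw [hxiy]
  linarith [hconv, hexp]

private lemma stmt12_key2 (i : ℝ) (hi : 1 < i) {x y : ℝ} (hx : 0 < x) (hy : 0 < y) :
    (x + y) ^ i - x ^ i - y ^ i ≤ (2 ^ i - 1) * (x ^ (i - 1) * y + x * y ^ (i - 1)) := by
  have h2i : (1:ℝ) < 2 ^ i := (Real.one_lt_rpow_iff_of_pos (by norm_num)).mpr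
    (Or.inl ⟨one_lt_two, by linarith⟩)
  have hC : (0:ℝ) ≤ 2 ^ i - 1 := by linarith
  rcases le_total y x with h | h
  · have hk := stmt12_key1 i hi x y hy h
    have hyi : 0 ≤ y ^ i := Real.rpow_nonneg hy.le i
    have hterm : 0 ≤ (2 ^ i - 1) * (x * y ^ (i - 1)) :=
      mul_nonneg hC (mul_nonneg hx.le (Real.rpow_nonneg hy.le _))
    nlinarith
  · have hk := stmt12_key1 i hi y x hx h
    have hxi : 0 ≤ x ^ i := Real.rpow_nonneg hx.le i
    have hterm : 0 ≤ (2 ^ i - 1) * (x ^ (i - 1) * y) :=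
      mul_nonneg hC (mul_nonneg (Real.rpow_nonneg hx.le _) hy.le)
    have hcomm : (x + y) ^ i = (y + x) ^ i := by rw [add_comm]
    nlinarith

/-- the `i`-th moment estimate for the coagulation operator: for `i > 1`
there is `K_i > 0`, depending only on `i` and `K`, such that
`½ ∫∫ ((x+y)^i − x^i − y^i) k(x,y) f(x) f(y) dx dy
  ≤ K_i (‖f‖^{(α)}_{[i−1]} ‖f‖_{[1]} + ‖f‖_{[i−1]} ‖f‖^{(α)}_{[1]})`. -/
theorem stmt12 (i K : ℝ) (hi : 1 < i) (hK : 0 < K) :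
    ∃ Ki : ℝ, 0 < Ki ∧
      ∀ (a : ℝ → ℝ) (α : ℝ) (k : ℝ → ℝ → ℝ) (f : ℝ → ℝ),
        Measurable a → (∀ x, 0 ≤ a x) → α ∈ Set.Ioo (0:ℝ) 1 →
        Measurable (Function.uncurry k) → (∀ x y, 0 ≤ k x y) →
        (∀ x y, k x y = k y x) →
        (∀ x y : ℝ, 0 < x → 0 < y →
          k x y ≤ K * ((1 + a x) ^ α + (1 + a y) ^ α)) →
        Measurable f → (∀ x, 0 ≤ f x) →
        (1 / 2 : ℝ≥0∞) * ∫⁻ x in Set.Ioi (0:ℝ), ∫⁻ y in Set.Ioi (0:ℝ),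
            ENNReal.ofReal (((x + y) ^ i - x ^ i - y ^ i) * k x y * f x * f y)
          ≤ ENNReal.ofReal Ki *
              ((∫⁻ x in Set.Ioi (0:ℝ),
                  ENNReal.ofReal (x ^ (i - 1) * (1 + a x) ^ α * f x)) *
                  (∫⁻ y in Set.Ioi (0:ℝ), ENNReal.ofReal (y * f y)) +
                (∫⁻ x in Set.Ioi (0:ℝ), ENNReal.ofReal (x ^ (i - 1) * f x)) *
                  (∫⁻ y in Set.Ioi (0:ℝ),
                    ENNReal.ofReal (y * (1 + a y) ^ α * f y))) := by
  have h2i : (1:ℝ) < 2 ^ i := (Real.one_lt_rpow_iff_of_pos (by norm_num)).mpr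
    (Or.inl ⟨one_lt_two, by linarith⟩)
  have hCpos : (0:ℝ) < 2 ^ i - 1 := by linarith
  refine ⟨(2 ^ i - 1) * K, mul_pos hCpos hK, ?_⟩
  intro a α k f ha ha0 hα hkm hk0 hks hkb hf hf0
  set c : ℝ≥0∞ := ENNReal.ofReal ((2 ^ i - 1) * K) with hc
  have hcne : c ≠ ⊤ := by rw [hc]; exact ENNReal.ofReal_ne_top
  -- the four basic functions
  set g1 : ℝ → ℝ≥0∞ := fun x => ENNReal.ofReal (x ^ (i - 1) * (1 + a x) ^ α * f x) with hg1
  set g2 : ℝ → ℝ≥0∞ := fun x => ENNReal.ofReal (x ^ (i - 1) * f x) with hg2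
  set g3 : ℝ → ℝ≥0∞ := fun x => ENNReal.ofReal (x * (1 + a x) ^ α * f x) with hg3
  set g4 : ℝ → ℝ≥0∞ := fun x => ENNReal.ofReal (x * f x) with hg4
  have hg1ne : ∀ x, g1 x ≠ ⊤ := fun x => by rw [hg1]; exact ENNReal.ofReal_ne_top
  have hg2ne : ∀ x, g2 x ≠ ⊤ := fun x => by rw [hg2]; exact ENNReal.ofReal_ne_top
  have hg3ne : ∀ x, g3 x ≠ ⊤ := fun x => by rw [hg3]; exact ENNReal.ofReal_ne_top
  have hg4ne : ∀ x, g4 x ≠ ⊤ := fun x => by rw [hg4]; exact ENNReal.ofReal_ne_top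
  have hag : Measurable (fun x : ℝ => (1 + a x) ^ α) := by measurability
  have hpg : Measurable (fun x : ℝ => x ^ (i - 1)) := by measurability
  have mg1 : Measurable g1 := (((hpg.mul hag).mul hf)).ennreal_ofReal
  have mg2 : Measurable g2 := ((hpg.mul hf)).ennreal_ofReal
  have mg3 : Measurable g3 := (((measurable_id.mul hag).mul hf)).ennreal_ofReal
  have mg4 : Measurable g4 := ((measurable_id.mul hf)).ennreal_ofReal
  set A : ℝ≥0∞ := ∫⁻ x in Set.Ioi (0:ℝ), g1 x with hA
  set C : ℝ≥0∞ := ∫⁻ x in Set.Ioi (0:ℝ), g2 x with hC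
  set D : ℝ≥0∞ := ∫⁻ x in Set.Ioi (0:ℝ), g3 x with hD
  set B : ℝ≥0∞ := ∫⁻ x in Set.Ioi (0:ℝ), g4 x with hB
  -- pointwise bound
  have hpt : ∀ x ∈ Set.Ioi (0:ℝ), ∀ y ∈ Set.Ioi (0:ℝ),
      ENNReal.ofReal (((x + y) ^ i - x ^ i - y ^ i) * k x y * f x * f y)
        ≤ c * (g1 x * g4 y + g2 x * g3 y + g3 x * g2 y + g4 x * g1 y) := by
    intro x hx y hy
    rw [Set.mem_Ioi] at hx hy
    set M : ℝ := x ^ (i - 1) * y + x * y ^ (i - 1) with hM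
    set N : ℝ := (1 + a x) ^ α + (1 + a y) ^ α with hN
    have hM0 : 0 ≤ M := add_nonneg (mul_nonneg (Real.rpow_nonneg hx.le _) hy.le)
      (mul_nonneg hx.le (Real.rpow_nonneg hy.le _))
    have hP : (x + y) ^ i - x ^ i - y ^ i ≤ (2 ^ i - 1) * M := stmt12_key2 i hi hx hy
    have h1 : ((x + y) ^ i - x ^ i - y ^ i) * k x y ≤ ((2 ^ i - 1) * M) * (K * N) :=
      le_trans (mul_le_mul_of_nonneg_right hP (hk0 x y))
        (mul_le_mul_of_nonneg_left (hkb x y hx hy)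
          (mul_nonneg (le_of_lt (by linarith)) hM0))
    have h2 : ((x + y) ^ i - x ^ i - y ^ i) * k x y * f x * f y
        ≤ ((2 ^ i - 1) * M) * (K * N) * f x * f y :=
      mul_le_mul_of_nonneg_right (mul_le_mul_of_nonneg_right h1 (hf0 x)) (hf0 y)
    have hring : ((2 ^ i - 1) * M) * (K * N) * f x * f y
        = ((2 ^ i - 1) * K) *
            ((x ^ (i - 1) * (1 + a x) ^ α * f x) * (y * f y)
              + ((x ^ (i - 1) * f x) * (y * (1 + a y) ^ α * f y)
              + ((x * (1 + a x) ^ α * f x) * (y ^ (i - 1) * f y)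
              + (x * f x) * (y ^ (i - 1) * (1 + a y) ^ α * f y)))) := by
      rw [hM, hN]; ring
    have hfx := hf0 x
    have hfy := hf0 y
    have hax : (0:ℝ) ≤ (1 + a x) ^ α := Real.rpow_nonneg (by linarith [ha0 x]) _
    have hay : (0:ℝ) ≤ (1 + a y) ^ α := Real.rpow_nonneg (by linarith [ha0 y]) _
    have hxp : (0:ℝ) ≤ x ^ (i - 1) := Real.rpow_nonneg hx.le _
    have hyp : (0:ℝ) ≤ y ^ (i - 1) := Real.rpow_nonneg hy.le _
    have e1 : ENNReal.ofReal ((x ^ (i - 1) * (1 + a x) ^ α * f x) * (y * f y))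
        = g1 x * g4 y := by
      rw [ENNReal.ofReal_mul (mul_nonneg (mul_nonneg hxp hax) hfx), hg1, hg4]
    have e2 : ENNReal.ofReal ((x ^ (i - 1) * f x) * (y * (1 + a y) ^ α * f y))
        = g2 x * g3 y := by
      rw [ENNReal.ofReal_mul (mul_nonneg hxp hfx), hg2, hg3]
    have e3 : ENNReal.ofReal ((x * (1 + a x) ^ α * f x) * (y ^ (i - 1) * f y))
        = g3 x * g2 y := by
      rw [ENNReal.ofReal_mul (mul_nonneg (mul_nonneg hx.le hax) hfx), hg3, hg2]
    have e4 : ENNReal.ofReal ((x * f x) * (y ^ (i - 1) * (1 + a y) ^ α * f y))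
        = g4 x * g1 y := by
      rw [ENNReal.ofReal_mul (mul_nonneg hx.le hfx), hg4, hg1]
    calc ENNReal.ofReal (((x + y) ^ i - x ^ i - y ^ i) * k x y * f x * f y)
        ≤ ENNReal.ofReal (((2 ^ i - 1) * M) * (K * N) * f x * f y) :=
          ENNReal.ofReal_le_ofReal h2
      _ = c * (g1 x * g4 y + (g2 x * g3 y + (g3 x * g2 y + g4 x * g1 y))) := by
          rw [hring, ENNReal.ofReal_mul (le_of_lt (mul_pos (by linarith) hK)),
            ENNReal.ofReal_add (by positivity) (by positivity),
            ENNReal.ofReal_add (by positivity) (by positivity),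
            ENNReal.ofReal_add (by positivity) (by positivity),
            e1, e2, e3, e4, hc]
      _ = c * (g1 x * g4 y + g2 x * g3 y + g3 x * g2 y + g4 x * g1 y) := by
          ring
  -- the double integral bound
  have hmain : ∫⁻ x in Set.Ioi (0:ℝ), ∫⁻ y in Set.Ioi (0:ℝ),
      ENNReal.ofReal (((x + y) ^ i - x ^ i - y ^ i) * k x y * f x * f y)
      ≤ c * (A * B + C * D + D * C + B * A) := by
    have hinner : ∀ x ∈ Set.Ioi (0:ℝ),
        (∫⁻ y in Set.Ioi (0:ℝ),
          ENNReal.ofReal (((x + y) ^ i - x ^ i - y ^ i) * k x y * f x * f y))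
        ≤ c * (g1 x * B + g2 x * D + g3 x * C + g4 x * A) := by
      intro x hx
      have m1 : Measurable fun y => g1 x * g4 y := mg4.const_mul _
      have m2 : Measurable fun y => g2 x * g3 y := mg3.const_mul _
      have m3 : Measurable fun y => g3 x * g2 y := mg2.const_mul _
      have m4 : Measurable fun y => g4 x * g1 y := mg1.const_mul _
      have m12 : Measurable fun y => g1 x * g4 y + g2 x * g3 y := m1.add m2
      have m123 : Measurable fun y => g1 x * g4 y + g2 x * g3 y + g3 x * g2 y := m12.add m3
      have mall : Measurable fun y => g1 x * g4 y + g2 x * g3 y + g3 x * g2 y + g4 x * g1 y :=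
        m123.add m4
      have step1 : (∫⁻ y in Set.Ioi (0:ℝ),
          ENNReal.ofReal (((x + y) ^ i - x ^ i - y ^ i) * k x y * f x * f y))
          ≤ ∫⁻ y in Set.Ioi (0:ℝ),
            c * (g1 x * g4 y + g2 x * g3 y + g3 x * g2 y + g4 x * g1 y) :=
        setLIntegral_mono (mall.const_mul c) (fun y hy => hpt x hx y hy)
      refine le_trans step1 (le_of_eq ?_)
      rw [lintegral_const_mul' c _ hcne]
      congr 1
      rw [lintegral_add_left m123, lintegral_add_left m12, lintegral_add_left m1,
        lintegral_const_mul' (g1 x) g4 (hg1ne x), lintegral_const_mul' (g2 x) g3 (hg2ne x),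
        lintegral_const_mul' (g3 x) g2 (hg3ne x), lintegral_const_mul' (g4 x) g1 (hg4ne x)]
    have n1 : Measurable fun x => g1 x * B := mg1.mul_const _
    have n2 : Measurable fun x => g2 x * D := mg2.mul_const _
    have n3 : Measurable fun x => g3 x * C := mg3.mul_const _
    have n4 : Measurable fun x => g4 x * A := mg4.mul_const _
    have n12 : Measurable fun x => g1 x * B + g2 x * D := n1.add n2
    have n123 : Measurable fun x => g1 x * B + g2 x * D + g3 x * C := n12.add n3
    have nall : Measurable fun x => g1 x * B + g2 x * D + g3 x * C + g4 x * A := n123.add n4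
    have step2 : (∫⁻ x in Set.Ioi (0:ℝ), ∫⁻ y in Set.Ioi (0:ℝ),
        ENNReal.ofReal (((x + y) ^ i - x ^ i - y ^ i) * k x y * f x * f y))
        ≤ ∫⁻ x in Set.Ioi (0:ℝ), c * (g1 x * B + g2 x * D + g3 x * C + g4 x * A) :=
      setLIntegral_mono (nall.const_mul c) hinner
    refine le_trans step2 (le_of_eq ?_)
    rw [lintegral_const_mul' c _ hcne]
    congr 1
    rw [lintegral_add_left n123, lintegral_add_left n12, lintegral_add_left n1,
      lintegral_mul_const'' B mg1.aemeasurable, lintegral_mul_const'' D mg2.aemeasurable,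
      lintegral_mul_const'' C mg3.aemeasurable, lintegral_mul_const'' A mg4.aemeasurable]
  calc (1 / 2 : ℝ≥0∞) * ∫⁻ x in Set.Ioi (0:ℝ), ∫⁻ y in Set.Ioi (0:ℝ),
        ENNReal.ofReal (((x + y) ^ i - x ^ i - y ^ i) * k x y * f x * f y)
      ≤ (1 / 2 : ℝ≥0∞) * (c * (A * B + C * D + D * C + B * A)) :=
        mul_le_mul_right hmain _
    _ = c * (A * B + C * D) := by
        have h2 : (1 / 2 : ℝ≥0∞) * 2 = 1 := by
          rw [one_div]
          exact ENNReal.inv_mul_cancel two_ne_zero ENNReal.ofNat_ne_top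
        have hz : A * B + C * D + D * C + B * A = 2 * (A * B + C * D) := by ring
        rw [hz, show (1 / 2 : ℝ≥0∞) * (c * (2 * (A * B + C * D)))
          = ((1 / 2 : ℝ≥0∞) * 2) * (c * (A * B + C * D)) by ring, h2, one_mul]
end

section
/- Let a : (0,∞) → [0,∞) be measurable and essentially bounded on (0,1], let b be a daughter distribution function, let i > 1, ω > 0, and suppose there is δ > 0 with N_i(x) ≥ δ x^i for a.e. x ≥ 1. Then for every measurable f : (0,∞) → [0,∞) with ∫₀^∞ (a(x)+1) x^i f(x) dx < ∞, one has ∫₀^∞ x^i (Ff)(x) dx = −∫₀^∞ N_i(x) a(x) f(x) dx ≤ −δ ∫₀^∞ (a(x)+ω) x^i f(x) dx + ω₁ ∫₀^∞ x^i f(x) dx, where ω₁ = δ·ess sup_{0<x≤1} a(x) + ω(1+δ). -/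
/-!
Writing `(Ff)(x) = −a(x) f(x) + G(x)` with `G(x) = ∫ₓ^∞ a(y) b(x,y) f(y) dy`, Tonelli's theorem on
the triangle `0 < x < y` turns `∫ x^i G(x) dx` into `∫ a(y) f(y) n_i(y) dy`; this integral is finite
because `x^i ≤ y^(i-1) x` on `(0, y)` and the mass condition give `n_i(y) ≤ y^i`. Subtracting
`∫ x^i a f` yields the identity. For the bound, `δ x^i a f ≤ N_i a f + δ M x^i f` holds pointwise
almost everywhere: on `(0,1]` because `a ≤ M = ess sup a` and `N_i ≥ 0`, on `(1,∞)` by the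
hypothesis on `N_i`. Integrating and adding `ω ∫ x^i f ≥ 0` gives the inequality.
-/

open MeasureTheory Set Filter
open scoped ENNReal

/-- The fragmentation operator `(Ff)(x) = −a(x) f(x) + ∫ₓ^∞ a(y) b(x,y) f(y) dy`. -/
noncomputable def fragOp (a : ℝ → ℝ) (b : ℝ → ℝ → ℝ) (f : ℝ → ℝ) (x : ℝ) : ℝ :=
  -(a x * f x) + ∫ y in Set.Ioi x, a y * b x y * f y

section Triangle

def triangle : Set (ℝ × ℝ) := {p | 0 < p.1 ∧ p.1 < p.2}

lemma measurableSet_triangle : MeasurableSet triangle :=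
  (measurableSet_lt measurable_const measurable_fst).inter
    (measurableSet_lt measurable_fst measurable_snd)

variable {F : ℝ → ℝ → ℝ}

lemma indicator_triangle_eq_indicator_Ioo (x y : ℝ) :
    triangle.indicator (Function.uncurry F) (x, y) = (Ioo 0 y).indicator (F · y) x := by
  simp only [indicator_apply, triangle, mem_ofPred_eq, mem_Ioo, Function.uncurry_apply_pair]

lemma indicator_triangle_eq_indicator_Ioi (x y : ℝ) :
    triangle.indicator (Function.uncurry F) (x, y)
      = (Ioi 0).indicator (fun x => (Ioi x).indicator (F x) y) x := by
  by_cases hx : 0 < x <;>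
    simp [indicator_apply, triangle, hx]

lemma integral_indicator_triangle_left (y : ℝ) :
    ∫ x, triangle.indicator (Function.uncurry F) (x, y) = ∫ x in Ioo 0 y, F x y := by
  simp_rw [indicator_triangle_eq_indicator_Ioo, integral_indicator measurableSet_Ioo]

lemma integral_indicator_triangle_right (x : ℝ) :
    ∫ y, triangle.indicator (Function.uncurry F) (x, y)
      = (Ioi 0).indicator (fun x => ∫ y in Ioi x, F x y) x := by
  by_cases hx : 0 < x
  · simp_rw [indicator_triangle_eq_indicator_Ioi, indicator_of_mem (show x ∈ Ioi 0 from hx),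
      integral_indicator measurableSet_Ioi]
  · simp_rw [indicator_triangle_eq_indicator_Ioi,
      indicator_of_notMem (show x ∉ Ioi 0 from hx), integral_zero]

lemma stronglyMeasurable_setIntegral_Ioo (hF : Measurable (Function.uncurry F)) :
    StronglyMeasurable fun y => ∫ x in Ioo 0 y, F x y := by
  simpa only [integral_indicator_triangle_left] using
    ((hF.indicator measurableSet_triangle).stronglyMeasurable).integral_prod_left'
      (μ := (volume : Measure ℝ))

lemma integrableOn_and_setIntegral_Ioi_swap (hF : Measurable (Function.uncurry F))
    (hF0 : ∀ x y, 0 < x → x < y → 0 ≤ F x y) (hsec : ∀ y, 0 < y → IntegrableOn (F · y) (Ioo 0 y))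
    (hint : IntegrableOn (fun y => ∫ x in Ioo 0 y, F x y) (Ioi 0)) :
    IntegrableOn (fun x => ∫ y in Ioi x, F x y) (Ioi 0) ∧
      ∫ x in Ioi 0, ∫ y in Ioi x, F x y = ∫ y in Ioi 0, ∫ x in Ioo 0 y, F x y := by
  have hvanish : ∀ y, y ∉ Ioi (0:ℝ) → ∫ x in Ioo 0 y, F x y = 0 := fun y hy => by
    rw [Ioo_eq_empty hy, Measure.restrict_empty, integral_zero_measure]
  have hG : Integrable (triangle.indicator (Function.uncurry F)) (volume.prod volume) := by
    refine (integrable_prod_iff'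
      (hF.indicator measurableSet_triangle).aestronglyMeasurable).2 ⟨?_, ?_⟩
    · refine Eventually.of_forall fun y => ?_
      simp_rw [indicator_triangle_eq_indicator_Ioo]
      by_cases hy : 0 < y
      · exact (integrable_indicator_iff measurableSet_Ioo).2 (hsec y hy)
      · simp [Ioo_eq_empty hy]
    · have hnorm : ∀ p, ‖triangle.indicator (Function.uncurry F) p‖
          = triangle.indicator (Function.uncurry F) p := fun p =>
        Real.norm_of_nonneg (indicator_nonneg (fun p hp => hF0 p.1 p.2 hp.1 hp.2) p)
      simp_rw [hnorm, integral_indicator_triangle_left]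
      rw [← indicator_eq_self.2 (Function.support_subset_iff'.2 hvanish)]
      exact (integrable_indicator_iff measurableSet_Ioi).2 hint
  constructor
  · simpa only [integral_indicator_triangle_right,
      integrable_indicator_iff measurableSet_Ioi] using hG.integral_prod_left
  · have hswap :=
      integral_integral_swap (f := fun x y => triangle.indicator (Function.uncurry F) (x, y)) hG
    simp only [integral_indicator_triangle_left, integral_indicator_triangle_right,
      integral_indicator measurableSet_Ioi] at hswap
    rw [hswap, setIntegral_eq_integral_of_forall_compl_eq_zero hvanish]

end Triangle

section DaughterMoments

variable {b : ℝ → ℝ → ℝ} {i y : ℝ}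

lemma rpow_le_rpow_sub_one_mul {x : ℝ} (hi : 1 ≤ i) (hx : 0 < x) (hxy : x ≤ y) :
    x ^ i ≤ y ^ (i - 1) * x :=
  calc x ^ i = x ^ (i - 1) * x := by rw [Real.rpow_sub_one hx.ne', div_mul_cancel₀ _ hx.ne']
    _ ≤ y ^ (i - 1) * x :=
      mul_le_mul_of_nonneg_right (Real.rpow_le_rpow hx.le hxy (by linarith)) hx.le

lemma rpow_mul_le_of_mem_Ioo (hb0 : ∀ x y, 0 ≤ b x y) (hi : 1 ≤ i) {x : ℝ} (hx : x ∈ Ioo 0 y) :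
    x ^ i * b x y ≤ y ^ (i - 1) * (x * b x y) := by
  rw [← mul_assoc]
  exact mul_le_mul_of_nonneg_right (rpow_le_rpow_sub_one_mul hi hx.1 hx.2.le) (hb0 x y)

lemma nmom_nonneg (hb0 : ∀ x y, 0 ≤ b x y) : 0 ≤ nmom b i y :=
  setIntegral_nonneg measurableSet_Ioo fun x hx =>
    mul_nonneg (Real.rpow_nonneg hx.1.le i) (hb0 x y)

lemma stronglyMeasurable_nmom (hb : Measurable (Function.uncurry b)) :
    StronglyMeasurable (nmom b i) :=
  stronglyMeasurable_setIntegral_Ioo (F := fun x y => x ^ i * b x y)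
    ((measurable_fst.pow_const i).mul hb)

lemma integrableOn_mul_of_mass (hmass : ∫ x in Ioo 0 y, x * b x y = y) (hy : 0 < y) :
    IntegrableOn (fun x => x * b x y) (Ioo 0 y) :=
  Integrable.of_integral_ne_zero (by rw [hmass]; exact hy.ne')

section Mass

variable (hb : Measurable (Function.uncurry b)) (hb0 : ∀ x y, 0 ≤ b x y)
  (hmass : ∫ x in Ioo 0 y, x * b x y = y) (hy : 0 < y) (hi : 1 ≤ i)
include hb hb0 hmass hy hi

lemma integrableOn_rpow_mul_of_mass : IntegrableOn (fun x => x ^ i * b x y) (Ioo 0 y) := by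
  refine ((integrableOn_mul_of_mass hmass hy).const_mul (y ^ (i - 1))).mono'
    ((measurable_id.pow_const i).mul
      (hb.comp (measurable_id.prodMk measurable_const))).aestronglyMeasurable
    ((ae_restrict_mem measurableSet_Ioo).mono fun x hx => ?_)
  rw [Real.norm_of_nonneg (mul_nonneg (Real.rpow_nonneg hx.1.le i) (hb0 x y))]
  exact rpow_mul_le_of_mem_Ioo hb0 hi hx

lemma nmom_le_rpow : nmom b i y ≤ y ^ i :=
  calc nmom b i y ≤ ∫ x in Ioo 0 y, y ^ (i - 1) * (x * b x y) := by
        refine setIntegral_mono_on (integrableOn_rpow_mul_of_mass hb hb0 hmass hy hi)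
          ((integrableOn_mul_of_mass hmass hy).const_mul _) measurableSet_Ioo
          fun x hx => rpow_mul_le_of_mem_Ioo hb0 hi hx
    _ = y ^ i := by
        rw [integral_const_mul, hmass, Real.rpow_sub_one hy.ne', div_mul_cancel₀ _ hy.ne']

lemma Nmom_nonneg : 0 ≤ Nmom b i y :=
  sub_nonneg.2 (nmom_le_rpow hb hb0 hmass hy hi)

end Mass

end DaughterMoments

section Fragmentation

variable {a : ℝ → ℝ} {b : ℝ → ℝ → ℝ} {f : ℝ → ℝ} {i : ℝ}
  (ha : Measurable a) (ha0 : ∀ x, 0 ≤ a x)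
  (hb : Measurable (Function.uncurry b)) (hb0 : ∀ x y, 0 ≤ b x y)
  (hmass : ∀ y : ℝ, 0 < y → ∫ x in Ioo 0 y, x * b x y = y) (hi : 1 ≤ i)
  (hf : Measurable f) (hf0 : ∀ x, 0 ≤ f x)
  (hint : IntegrableOn (fun x => x ^ i * a x * f x) (Ioi 0))
include ha ha0 hb hb0 hmass hi hf hf0 hint

lemma integrableOn_mul_nmom : IntegrableOn (fun y => a y * f y * nmom b i y) (Ioi 0) := by
  refine hint.mono'
    ((ha.mul hf).stronglyMeasurable.mul (stronglyMeasurable_nmom hb)).aestronglyMeasurable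
    ((ae_restrict_mem measurableSet_Ioi).mono fun y hy => ?_)
  have haf : 0 ≤ a y * f y := mul_nonneg (ha0 y) (hf0 y)
  rw [Real.norm_of_nonneg (mul_nonneg haf (nmom_nonneg hb0))]
  calc a y * f y * nmom b i y ≤ a y * f y * y ^ i :=
        mul_le_mul_of_nonneg_left (nmom_le_rpow hb hb0 (hmass y hy) hy hi) haf
    _ = y ^ i * a y * f y := by ring

lemma integrableOn_Nmom_mul : IntegrableOn (fun x => Nmom b i x * a x * f x) (Ioi 0) :=
  (hint.sub (integrableOn_mul_nmom ha ha0 hb hb0 hmass hi hf hf0 hint)).congr_fun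
    (fun x _ => by simp only [Nmom, Pi.sub_apply]; ring) measurableSet_Ioi

lemma integral_rpow_mul_fragOp :
    ∫ x in Ioi 0, x ^ i * fragOp a b f x = -∫ x in Ioi 0, Nmom b i x * a x * f x := by
  set F : ℝ → ℝ → ℝ := fun x y => x ^ i * (a y * b x y * f y)
  have hF_inner : ∀ y, ∫ x in Ioo 0 y, F x y = a y * f y * nmom b i y := fun y => by
    rw [nmom, ← integral_const_mul]
    exact integral_congr_ae (Eventually.of_forall fun x => by simp only [F]; ring)
  have hF_outer : ∀ x, ∫ y in Ioi x, F x y = x ^ i * ∫ y in Ioi x, a y * b x y * f y :=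
    fun x => integral_const_mul _ _
  obtain ⟨hgain_int, hgain⟩ := integrableOn_and_setIntegral_Ioi_swap (F := F)
    ((measurable_fst.pow_const i).mul (((ha.comp measurable_snd).mul hb).mul
      (hf.comp measurable_snd)))
    (fun x y hx _ => mul_nonneg (Real.rpow_nonneg hx.le i)
      (mul_nonneg (mul_nonneg (ha0 y) (hb0 x y)) (hf0 y)))
    (fun y hy => ((integrableOn_rpow_mul_of_mass hb hb0 (hmass y hy) hy hi).mul_const
      (a y * f y)).congr (Eventually.of_forall fun x => by simp only [F]; ring))
    (by simpa only [hF_inner] using integrableOn_mul_nmom ha ha0 hb hb0 hmass hi hf hf0 hint)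
  simp only [hF_outer, hF_inner] at hgain_int hgain
  calc ∫ x in Ioi 0, x ^ i * fragOp a b f x
      = ∫ x in Ioi 0, (x ^ i * ∫ y in Ioi x, a y * b x y * f y) - x ^ i * a x * f x :=
        integral_congr_ae (Eventually.of_forall fun x => by simp only [fragOp]; ring)
    _ = ∫ x in Ioi 0, a x * f x * nmom b i x - x ^ i * a x * f x := by
        rw [integral_sub hgain_int hint, hgain,
          integral_sub (integrableOn_mul_nmom ha ha0 hb hb0 hmass hi hf hf0 hint) hint]
    _ = -∫ x in Ioi 0, Nmom b i x * a x * f x := by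
        rw [← integral_neg]
        exact integral_congr_ae (Eventually.of_forall fun x => by simp only [Nmom]; ring)

lemma neg_integral_Nmom_mul_le {M ω δ : ℝ}
    (hM : ∀ᵐ x ∂(volume.restrict (Ioc 0 1)), a x ≤ M) (hM0 : 0 ≤ M) (hω : 0 ≤ ω) (hδ : 0 ≤ δ)
    (hN : ∀ᵐ x ∂(volume.restrict (Ici 1)), δ * x ^ i ≤ Nmom b i x)
    (hint' : IntegrableOn (fun x => x ^ i * f x) (Ioi 0)) :
    -∫ x in Ioi 0, Nmom b i x * a x * f x
      ≤ -(δ * ∫ x in Ioi 0, (a x + ω) * x ^ i * f x)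
        + (δ * M + ω * (1 + δ)) * ∫ x in Ioi 0, x ^ i * f x := by
  have hNaf0 : ∀ x, 0 < x → 0 ≤ Nmom b i x * a x * f x := fun x hx =>
    mul_nonneg (mul_nonneg (Nmom_nonneg hb hb0 (hmass x hx) hx hi) (ha0 x)) (hf0 x)
  have hxf0 : ∀ x, 0 < x → 0 ≤ x ^ i * f x := fun x hx =>
    mul_nonneg (Real.rpow_nonneg hx.le i) (hf0 x)
  have hpt : ∀ᵐ x ∂(volume.restrict (Ioi 0)),
      δ * (x ^ i * a x * f x) ≤ Nmom b i x * a x * f x + δ * M * (x ^ i * f x) := by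
    rw [← Ioc_union_Ioi_eq_Ioi zero_le_one, ae_restrict_union_iff]
    constructor
    · filter_upwards [hM, ae_restrict_mem measurableSet_Ioc] with x hax hx
      have := mul_le_mul_of_nonneg_left hax (mul_nonneg hδ (hxf0 x hx.1))
      nlinarith [hNaf0 x hx.1]
    · filter_upwards [ae_restrict_of_ae_restrict_of_subset Ioi_subset_Ici_self hN,
        ae_restrict_mem measurableSet_Ioi] with x hNx hx
      have hx0 : (0 : ℝ) < x := zero_lt_one.trans hx
      have := mul_le_mul_of_nonneg_right hNx (mul_nonneg (ha0 x) (hf0 x))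
      nlinarith [mul_nonneg (mul_nonneg hδ hM0) (hxf0 x hx0)]
  have hNaf := integrableOn_Nmom_mul ha ha0 hb hb0 hmass hi hf hf0 hint
  have hmono : δ * ∫ x in Ioi 0, x ^ i * a x * f x
      ≤ (∫ x in Ioi 0, Nmom b i x * a x * f x) + δ * M * ∫ x in Ioi 0, x ^ i * f x := by
    rw [← integral_const_mul, ← integral_const_mul, ← integral_add hNaf (hint'.const_mul _)]
    exact integral_mono_ae (hint.const_mul δ) (hNaf.add (hint'.const_mul _)) hpt
  have hsplit : ∫ x in Ioi 0, (a x + ω) * x ^ i * f x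
      = (∫ x in Ioi 0, x ^ i * a x * f x) + ω * ∫ x in Ioi 0, x ^ i * f x := by
    rw [← integral_const_mul, ← integral_add hint (hint'.const_mul ω)]
    exact integral_congr_ae (Eventually.of_forall fun x => by ring)
  have hxf_int0 : 0 ≤ ∫ x in Ioi 0, x ^ i * f x :=
    setIntegral_nonneg measurableSet_Ioi hxf0
  rw [hsplit]
  nlinarith [mul_nonneg hω hxf_int0]

end Fragmentation

theorem stmt15_general (a : ℝ → ℝ) (b : ℝ → ℝ → ℝ) (i ω δ : ℝ) (f : ℝ → ℝ)
    (ha_meas : Measurable a) (ha_nonneg : ∀ x, 0 ≤ a x)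
    (ha_bdd : Filter.IsBoundedUnder (· ≤ ·)
      (MeasureTheory.ae (volume.restrict (Set.Ioc (0:ℝ) 1))) a)
    (hb_meas : Measurable (Function.uncurry b))
    (hb_nonneg : ∀ x y, 0 ≤ b x y)
    (hb_mass : ∀ y : ℝ, 0 < y → ∫ x in Set.Ioo 0 y, x * b x y = y)
    (hi : 1 < i) (hω : 0 < ω) (hδ : 0 < δ)
    (hN : ∀ᵐ x ∂(volume.restrict (Set.Ici (1:ℝ))), δ * x ^ i ≤ Nmom b i x)
    (hf_meas : Measurable f) (hf_nonneg : ∀ x, 0 ≤ f x)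
    (hf_int : ∫⁻ x in Set.Ioi (0:ℝ), ENNReal.ofReal ((a x + 1) * x ^ i * f x) < ∞) :
    (∫ x in Set.Ioi (0:ℝ), x ^ i * fragOp a b f x
        = -∫ x in Set.Ioi (0:ℝ), Nmom b i x * a x * f x) ∧
    (-∫ x in Set.Ioi (0:ℝ), Nmom b i x * a x * f x)
      ≤ -(δ * ∫ x in Set.Ioi (0:ℝ), (a x + ω) * x ^ i * f x)
        + (δ * essSup a (volume.restrict (Set.Ioc (0:ℝ) 1)) + ω * (1 + δ)) *
            ∫ x in Set.Ioi (0:ℝ), x ^ i * f x := by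
  have hweight0 : ∀ x, 0 < x → 0 ≤ x ^ i * f x := fun x hx =>
    mul_nonneg (Real.rpow_nonneg hx.le i) (hf_nonneg x)
  have hdom : IntegrableOn (fun x => (a x + 1) * x ^ i * f x) (Ioi 0) :=
    (lintegral_ofReal_ne_top_iff_integrable
      (((ha_meas.add_const 1).mul (measurable_id.pow_const i)).mul hf_meas).aestronglyMeasurable
      ((ae_restrict_mem measurableSet_Ioi).mono fun x hx => by
        rw [Pi.zero_apply, mul_assoc]
        exact mul_nonneg (add_nonneg (ha_nonneg x) zero_le_one) (hweight0 x hx))).1 hf_int.ne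
  have hint : IntegrableOn (fun x => x ^ i * a x * f x) (Ioi 0) := by
    refine hdom.mono' (((measurable_id.pow_const i).mul ha_meas).mul hf_meas).aestronglyMeasurable
      ((ae_restrict_mem measurableSet_Ioi).mono fun x hx => ?_)
    have := hweight0 x hx
    rw [Real.norm_of_nonneg (by nlinarith [ha_nonneg x])]
    nlinarith [ha_nonneg x]
  have hint' : IntegrableOn (fun x => x ^ i * f x) (Ioi 0) := by
    refine hdom.mono' ((measurable_id.pow_const i).mul hf_meas).aestronglyMeasurable
      ((ae_restrict_mem measurableSet_Ioi).mono fun x hx => ?_)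
    have := hweight0 x hx
    rw [Real.norm_of_nonneg this]
    nlinarith [ha_nonneg x]
  have hM0 : 0 ≤ essSup a (volume.restrict (Ioc (0:ℝ) 1)) := by
    have : (ae (volume.restrict (Ioc (0:ℝ) 1))).NeBot := ae_neBot.2 (by simp)
    obtain ⟨x, hx⟩ := (ae_le_essSup ha_bdd).exists
    exact (ha_nonneg x).trans hx
  exact ⟨integral_rpow_mul_fragOp ha_meas ha_nonneg hb_meas hb_nonneg hb_mass hi.le hf_meas
      hf_nonneg hint,
    neg_integral_Nmom_mul_le ha_meas ha_nonneg hb_meas hb_nonneg hb_mass hi.le hf_meas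
      hf_nonneg hint (ae_le_essSup ha_bdd) hM0 hω.le hδ.le hN hint'⟩

/-- the `i`-th moment estimate for the fragmentation operator:
`∫₀^∞ x^i (Ff)(x) dx = −∫₀^∞ N_i(x) a(x) f(x) dx
  ≤ −δ ∫₀^∞ (a(x)+ω) x^i f(x) dx + ω₁ ∫₀^∞ x^i f(x) dx`,
with `ω₁ = δ · ess sup_{0<x≤1} a(x) + ω(1+δ)`. -/
theorem stmt15 (a : ℝ → ℝ) (b : ℝ → ℝ → ℝ) (i ω δ : ℝ) (f : ℝ → ℝ)
    (ha_meas : Measurable a) (ha_nonneg : ∀ x, 0 ≤ a x)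
    (ha_bdd : Filter.IsBoundedUnder (· ≤ ·)
      (MeasureTheory.ae (volume.restrict (Set.Ioc (0:ℝ) 1))) a)
    (hb_meas : Measurable (Function.uncurry b))
    (hb_nonneg : ∀ x y, 0 ≤ b x y)
    (hb_supp : ∀ y : ℝ, 0 < y → ∀ᵐ x ∂(volume : Measure ℝ), y < x → b x y = 0)
    (hb_mass : ∀ y : ℝ, 0 < y → ∫ x in Set.Ioo 0 y, x * b x y = y)
    (hi : 1 < i) (hω : 0 < ω) (hδ : 0 < δ)
    (hN : ∀ᵐ x ∂(volume.restrict (Set.Ici (1:ℝ))), δ * x ^ i ≤ Nmom b i x)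
    (hf_meas : Measurable f) (hf_nonneg : ∀ x, 0 ≤ f x)
    (hf_int : ∫⁻ x in Set.Ioi (0:ℝ), ENNReal.ofReal ((a x + 1) * x ^ i * f x) < ∞) :
    (∫ x in Set.Ioi (0:ℝ), x ^ i * fragOp a b f x
        = -∫ x in Set.Ioi (0:ℝ), Nmom b i x * a x * f x) ∧
    (-∫ x in Set.Ioi (0:ℝ), Nmom b i x * a x * f x)
      ≤ -(δ * ∫ x in Set.Ioi (0:ℝ), (a x + ω) * x ^ i * f x)
        + (δ * essSup a (volume.restrict (Set.Ioc (0:ℝ) 1)) + ω * (1 + δ)) *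
            ∫ x in Set.Ioi (0:ℝ), x ^ i * f x :=
  stmt15_general a b i ω δ f ha_meas ha_nonneg ha_bdd hb_meas hb_nonneg hb_mass hi hω hδ hN hf_meas
    hf_nonneg hf_int
end

section
/- Let a : (0,∞) → [0,∞) be measurable, ω ≥ 0, α ∈ (0,1), and set c_a = ess sup_{0<x≤1} (ω+a(x))^α, assumed finite. Let i ≥ 2 and 1 ≤ r ≤ i−1 be real numbers. Then for every measurable f : (0,∞) → [0,∞), ∫₀^∞ x^r (ω+a(x))^α f(x) dx ≤ c_a ∫₀^∞ x f(x) dx + ( ∫₀^∞ x^{i−1} f(x) dx )^{1−α} ( ∫₀^∞ x^i (ω+a(x)) f(x) dx )^{α}. -/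
open MeasureTheory Set Filter
open scoped ENNReal

/-!
Split `(0, ∞)` at `1`. On `(0, 1]` we have `x ^ r ≤ x` and `(ω + a x) ^ α ≤ c_a` almost everywhere.
On `(1, ∞)` we have `x ^ r ≤ x ^ (i - 1 + α)`, and the weight `x ^ (i - 1 + α) (ω + a x) ^ α f x` is
the geometric mean `(x ^ (i - 1) f x) ^ (1 - α) (x ^ i (ω + a x) f x) ^ α`, so Hölder's inequality
with exponents `1 / (1 - α)` and `1 / α` applies.
-/

lemma Real.rpow_mul_rpow_interpolate {x y b : ℝ} (p q θ : ℝ) (hx : 0 < x) (hb : 0 ≤ b)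
    (hy : 0 ≤ y) :
    (x ^ p * y) ^ (1 - θ) * (x ^ q * b * y) ^ θ = x ^ (p * (1 - θ) + q * θ) * b ^ θ * y := by
  have hxp := Real.rpow_nonneg hx.le p
  have hxq := Real.rpow_nonneg hx.le q
  rw [Real.mul_rpow hxp hy, Real.mul_rpow (mul_nonneg hxq hb) hy, Real.mul_rpow hxq hb,
    ← Real.rpow_mul hx.le, ← Real.rpow_mul hx.le, Real.rpow_add hx]
  have hy1 : y ^ (1 - θ) * y ^ θ = y := by
    rw [← Real.rpow_add' hy (by norm_num), sub_add_cancel, Real.rpow_one]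
  calc x ^ (p * (1 - θ)) * y ^ (1 - θ) * (x ^ (q * θ) * b ^ θ * y ^ θ)
      = x ^ (p * (1 - θ)) * x ^ (q * θ) * b ^ θ * (y ^ (1 - θ) * y ^ θ) := by ring
    _ = x ^ (p * (1 - θ)) * x ^ (q * θ) * b ^ θ * y := by rw [hy1]

lemma ENNReal.ofReal_rpow_mul_rpow_interpolate {x y b : ℝ} (p q : ℝ) {θ : ℝ} (hx : 0 < x)
    (hb : 0 ≤ b) (hy : 0 ≤ y) (hθ : θ ∈ Icc (0 : ℝ) 1) :
    ENNReal.ofReal (x ^ p * y) ^ (1 - θ) * ENNReal.ofReal (x ^ q * b * y) ^ θ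
      = ENNReal.ofReal (x ^ (p * (1 - θ) + q * θ) * b ^ θ * y) := by
  have hxp := Real.rpow_nonneg hx.le p
  have hxq := Real.rpow_nonneg hx.le q
  rw [ENNReal.ofReal_rpow_of_nonneg (mul_nonneg hxp hy) (sub_nonneg.2 hθ.2),
    ENNReal.ofReal_rpow_of_nonneg (mul_nonneg (mul_nonneg hxq hb) hy) hθ.1,
    ← ENNReal.ofReal_mul (Real.rpow_nonneg (mul_nonneg hxp hy) _),
    Real.rpow_mul_rpow_interpolate p q θ hx hb hy]

lemma setLIntegral_Ioc_zero_one_rpow_mul_le_essSup {w f : ℝ → ℝ} {r : ℝ} (hr : 1 ≤ r)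
    (hw : ∀ x, 0 ≤ w x)
    (hw_bdd : IsBoundedUnder (· ≤ ·) (ae (volume.restrict (Ioc (0 : ℝ) 1))) w)
    (hf : ∀ x, 0 ≤ f x) :
    ∫⁻ x in Ioc (0 : ℝ) 1, ENNReal.ofReal (x ^ r * w x * f x)
      ≤ ENNReal.ofReal (essSup w (volume.restrict (Ioc (0 : ℝ) 1))) *
          ∫⁻ x in Ioc (0 : ℝ) 1, ENNReal.ofReal (x * f x) := by
  set c := essSup w (volume.restrict (Ioc (0 : ℝ) 1))
  rw [← lintegral_const_mul' _ _ ENNReal.ofReal_ne_top]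
  refine lintegral_mono_ae ?_
  filter_upwards [ae_le_essSup hw_bdd, ae_restrict_mem measurableSet_Ioc] with x hwc ⟨hx0, hx1⟩
  have hxr : x ^ r ≤ x := by
    simpa using Real.rpow_le_rpow_of_exponent_ge hx0 hx1 hr
  rw [← ENNReal.ofReal_mul ((hw x).trans hwc)]
  refine ENNReal.ofReal_le_ofReal ?_
  calc x ^ r * w x * f x ≤ x * c * f x := by
        have := hf x
        have := hw x
        gcongr
    _ = c * (x * f x) := by ring

lemma setLIntegral_Ioi_one_rpow_mul_le_holder {b f : ℝ → ℝ} {α i r : ℝ}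
    (hb_meas : Measurable b) (hb : ∀ x, 0 ≤ b x) (hf_meas : Measurable f) (hf : ∀ x, 0 ≤ f x)
    (hα : α ∈ Icc (0 : ℝ) 1) (hr : r ≤ i - 1 + α) :
    ∫⁻ x in Ioi (1 : ℝ), ENNReal.ofReal (x ^ r * b x ^ α * f x)
      ≤ (∫⁻ x in Ioi (1 : ℝ), ENNReal.ofReal (x ^ (i - 1) * f x)) ^ (1 - α) *
          (∫⁻ x in Ioi (1 : ℝ), ENNReal.ofReal (x ^ i * b x * f x)) ^ α := by
  have hG : Measurable fun x : ℝ => ENNReal.ofReal (x ^ (i - 1) * f x) := by fun_prop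
  have hH : Measurable fun x : ℝ => ENNReal.ofReal (x ^ i * b x * f x) := by fun_prop
  refine le_trans ?_ (ENNReal.lintegral_mul_norm_pow_le hG.aemeasurable hH.aemeasurable
    (sub_nonneg.2 hα.2) hα.1 (sub_add_cancel 1 α))
  refine setLIntegral_mono' measurableSet_Ioi fun x (hx : 1 < x) => ?_
  have hx0 : 0 < x := one_pos.trans hx
  rw [ENNReal.ofReal_rpow_mul_rpow_interpolate _ _ hx0 (hb x) (hf x) hα]
  refine ENNReal.ofReal_le_ofReal ?_
  have hexp : r ≤ (i - 1) * (1 - α) + i * α := by linarith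
  gcongr
  · exact hf x
  · exact Real.rpow_nonneg (hb x) α
  · exact hx.le

theorem stmt17_general (a : ℝ → ℝ) (ω α i r : ℝ) (f : ℝ → ℝ)
    (ha_meas : Measurable a) (ha_nonneg : ∀ x, 0 ≤ a x)
    (hω : 0 ≤ ω) (hα : α ∈ Set.Ioo (0:ℝ) 1)
    (ha_bdd : Filter.IsBoundedUnder (· ≤ ·)
      (MeasureTheory.ae (volume.restrict (Set.Ioc (0:ℝ) 1)))
      (fun x => (ω + a x) ^ α))
    (hr1 : 1 ≤ r) (hr2 : r ≤ i - 1)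
    (hf_meas : Measurable f) (hf_nonneg : ∀ x, 0 ≤ f x) :
    ∫⁻ x in Set.Ioi (0:ℝ), ENNReal.ofReal (x ^ r * (ω + a x) ^ α * f x)
      ≤ ENNReal.ofReal
            (essSup (fun x => (ω + a x) ^ α) (volume.restrict (Set.Ioc (0:ℝ) 1))) *
          (∫⁻ x in Set.Ioi (0:ℝ), ENNReal.ofReal (x * f x)) +
        (∫⁻ x in Set.Ioi (0:ℝ), ENNReal.ofReal (x ^ (i - 1) * f x)) ^ (1 - α) *
          (∫⁻ x in Set.Ioi (0:ℝ),
            ENNReal.ofReal (x ^ i * (ω + a x) * f x)) ^ α := by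
  have hb : ∀ x, 0 ≤ ω + a x := fun x => add_nonneg hω (ha_nonneg x)
  conv_lhs => rw [← Ioc_union_Ioi_eq_Ioi zero_le_one,
    lintegral_union measurableSet_Ioi (Ioc_disjoint_Ioi le_rfl)]
  gcongr ?_ + ?_
  · refine (setLIntegral_Ioc_zero_one_rpow_mul_le_essSup hr1 (fun x => Real.rpow_nonneg (hb x) α)
      ha_bdd hf_nonneg).trans ?_
    gcongr
    exact Ioc_subset_Ioi_self
  · refine (setLIntegral_Ioi_one_rpow_mul_le_holder (by fun_prop) hb hf_meas hf_nonneg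
      (Ioo_subset_Icc_self hα) (by linarith [hα.1])).trans ?_
    gcongr <;> linarith [hα.1, hα.2]

/-- the interpolation inequality
`‖f‖^{(α)}_{[r]} ≤ c_a ‖f‖_{[1]} + ‖f‖_{[i−1]}^{1−α} (‖f‖^{(1)}_{[i]})^α`, where
`c_a = ess sup_{0<x≤1} (ω+a(x))^α`. -/
theorem stmt17 (a : ℝ → ℝ) (ω α i r : ℝ) (f : ℝ → ℝ)
    (ha_meas : Measurable a) (ha_nonneg : ∀ x, 0 ≤ a x)
    (hω : 0 ≤ ω) (hα : α ∈ Set.Ioo (0:ℝ) 1)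
    (ha_bdd : Filter.IsBoundedUnder (· ≤ ·)
      (MeasureTheory.ae (volume.restrict (Set.Ioc (0:ℝ) 1)))
      (fun x => (ω + a x) ^ α))
    (hi : 2 ≤ i) (hr1 : 1 ≤ r) (hr2 : r ≤ i - 1)
    (hf_meas : Measurable f) (hf_nonneg : ∀ x, 0 ≤ f x) :
    ∫⁻ x in Set.Ioi (0:ℝ), ENNReal.ofReal (x ^ r * (ω + a x) ^ α * f x)
      ≤ ENNReal.ofReal
            (essSup (fun x => (ω + a x) ^ α) (volume.restrict (Set.Ioc (0:ℝ) 1))) *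
          (∫⁻ x in Set.Ioi (0:ℝ), ENNReal.ofReal (x * f x)) +
        (∫⁻ x in Set.Ioi (0:ℝ), ENNReal.ofReal (x ^ (i - 1) * f x)) ^ (1 - α) *
          (∫⁻ x in Set.Ioi (0:ℝ),
            ENNReal.ofReal (x ^ i * (ω + a x) * f x)) ^ α :=
  stmt17_general a ω α i r f ha_meas ha_nonneg hω hα ha_bdd hr1 hr2 hf_meas hf_nonneg
end

section
/- Let a : (0,∞) → [0,∞) be measurable and essentially bounded on (0,1], let b be a daughter distribution function, and suppose there are l ≥ 0 and b₀ > 0 with n₀(x) ≤ b₀(1+x^l) for a.e. x > 0. Let i ≥ max{1, l}. Then for every measurable f : (0,∞) → [0,∞) with ∫₀^∞ a(y)(1+y^i) f(y) dy < ∞, one has ∫₀^∞ (Ff)(x) dx = ∫₀^∞ (n₀(y) − 1) a(y) f(y) dy ≤ a₁ ∫₀^1 f(y) dy + 2b₀ ∫₁^∞ a(y)(1+y^i) f(y) dy, where a₁ = 2b₀ · ess sup_{0<y≤1} a(y)(1+y^i). -/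
open MeasureTheory Set Filter
open scoped ENNReal

/-!
Tonelli's theorem on the triangle `0 < x < y` turns `∫₀^∞ ∫ₓ^∞ a(y) b(x,y) f(y) dy dx` into
`∫₀^∞ n₀(y) a(y) f(y) dy`. This is finite because `n₀(y) ≤ b₀(1 + y^l) ≤ 2b₀(1 + y^i)`, so both
terms of `Ff` are integrable and the identity follows by subtraction. The same pointwise bound,
together with `a(y)(1 + y^i) ≤ ess sup_{(0,1]} a(1 + y^i)` on `(0,1]`, gives the estimate.
-/

theorem Measurable.lintegral_restrict_prodMk_preimage {α β : Type*} [MeasurableSpace α]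
    [MeasurableSpace β] {ν : Measure β} [SFinite ν] {S : Set (α × β)} (hS : MeasurableSet S)
    {K : α × β → ℝ≥0∞} (hK : Measurable K) :
    Measurable fun x => ∫⁻ y in Prod.mk x ⁻¹' S, K (x, y) ∂ν := by
  have hsection : ∀ x, ∫⁻ y in Prod.mk x ⁻¹' S, K (x, y) ∂ν = ∫⁻ y, S.indicator K (x, y) ∂ν :=
    fun x => (lintegral_indicator (measurable_prodMk_left hS) _).symm.trans
      (lintegral_congr fun _ => indicator_comp_right _)
  simp_rw [hsection]
  exact (hK.indicator hS).lintegral_prod_right'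

theorem lintegral_Ioi_lintegral_Ioi_eq_lintegral_Ioi_lintegral_Ioo (c : ℝ) {K : ℝ → ℝ → ℝ≥0∞}
    (hK : Measurable (Function.uncurry K)) :
    ∫⁻ x in Ioi c, ∫⁻ y in Ioi x, K x y = ∫⁻ y in Ioi c, ∫⁻ x in Ioo c y, K x y := by
  let F : ℝ → ℝ → ℝ≥0∞ := fun x y => if x < y then K x y else 0
  have hF : Measurable (Function.uncurry F) :=
    Measurable.ite (measurableSet_lt measurable_fst measurable_snd) hK measurable_const
  calc ∫⁻ x in Ioi c, ∫⁻ y in Ioi x, K x y = ∫⁻ x in Ioi c, ∫⁻ y in Ioi c, F x y := by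
        refine setLIntegral_congr_fun measurableSet_Ioi fun x hx => ?_
        have hF_x : F x = (Ioi x).indicator (K x) := by
          ext y; simp only [F, indicator_apply, mem_Ioi]
        rw [hF_x, lintegral_indicator measurableSet_Ioi, Measure.restrict_restrict measurableSet_Ioi,
          inter_eq_left.mpr (Ioi_subset_Ioi (le_of_lt hx))]
    _ = ∫⁻ y in Ioi c, ∫⁻ x in Ioi c, F x y := lintegral_lintegral_swap hF.aemeasurable
    _ = ∫⁻ y in Ioi c, ∫⁻ x in Ioo c y, K x y := by
        refine lintegral_congr fun y => ?_
        have hF_y : (F · y) = (Iio y).indicator (K · y) := by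
          ext x; simp only [F, indicator_apply, mem_Iio]
        rw [hF_y, lintegral_indicator measurableSet_Iio, Measure.restrict_restrict measurableSet_Iio,
          inter_comm, Ioi_inter_Iio]

theorem lintegral_ofReal_mul_le_essSup_mul {α : Type*} [MeasurableSpace α] {μ : Measure α}
    {w g : α → ℝ} {c : ℝ} (hc : 0 ≤ c) (hg : 0 ≤ᵐ[μ] g)
    (hw : IsBoundedUnder (· ≤ ·) (ae μ) w) :
    ∫⁻ x, ENNReal.ofReal c * ENNReal.ofReal (w x * g x) ∂μ
      ≤ ENNReal.ofReal (c * essSup w μ) * ∫⁻ x, ENNReal.ofReal (g x) ∂μ := by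
  rw [← lintegral_const_mul' _ _ ENNReal.ofReal_ne_top]
  refine lintegral_mono_ae ?_
  filter_upwards [ae_le_essSup hw, hg] with x hwx hgx
  rw [← ENNReal.ofReal_mul hc, ← ENNReal.ofReal_mul' hgx, ← mul_assoc]
  exact ENNReal.ofReal_le_ofReal
    (mul_le_mul_of_nonneg_right (mul_le_mul_of_nonneg_left hwx hc) hgx)

theorem one_add_rpow_le_two_mul_one_add_rpow {y l i : ℝ} (hy : 0 < y) (hl : 0 ≤ l)
    (hli : l ≤ i) : 1 + y ^ l ≤ 2 * (1 + y ^ i) := by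
  have hyi : 0 ≤ y ^ i := Real.rpow_nonneg hy.le i
  rcases le_total y 1 with hy1 | hy1
  · linarith [Real.rpow_le_one hy.le hy1 hl]
  · linarith [Real.rpow_le_rpow_of_exponent_le hy1 hli]

theorem measurable_nL {b : ℝ → ℝ → ℝ} (hb : Measurable (Function.uncurry b)) (m : ℝ) :
    Measurable (nL b m) :=
  Measurable.lintegral_restrict_prodMk_preimage (ν := volume)
    (S := {p : ℝ × ℝ | 0 < p.2 ∧ p.2 < p.1})
    ((measurableSet_lt measurable_const measurable_snd).inter
      (measurableSet_lt measurable_snd measurable_fst))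
    (K := fun p => ENNReal.ofReal (p.2 ^ m * b p.2 p.1)) (by fun_prop)

theorem nmom_eq_toReal_nL {b : ℝ → ℝ → ℝ} (hb : Measurable (Function.uncurry b))
    (hb_nonneg : ∀ x y, 0 ≤ b x y) (m y : ℝ) : nmom b m y = (nL b m y).toReal := by
  refine integral_eq_lintegral_of_nonneg_ae ?_ (by fun_prop)
  filter_upwards [ae_restrict_mem measurableSet_Ioo] with x hx
  exact mul_nonneg (Real.rpow_nonneg hx.1.le m) (hb_nonneg x y)

section Fragmentation

variable {a : ℝ → ℝ} {b : ℝ → ℝ → ℝ} {f : ℝ → ℝ}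

theorem lintegral_Ioi_lintegral_Ioi_eq_lintegral_nL_mul (ha : Measurable a)
    (hb : Measurable (Function.uncurry b)) (hf : Measurable f) (hb_nonneg : ∀ x y, 0 ≤ b x y) :
    ∫⁻ x in Ioi 0, ∫⁻ y in Ioi x, ENNReal.ofReal (a y * b x y * f y)
      = ∫⁻ y in Ioi 0, nL b 0 y * ENNReal.ofReal (a y * f y) := by
  rw [lintegral_Ioi_lintegral_Ioi_eq_lintegral_Ioi_lintegral_Ioo 0 (by fun_prop)]
  refine lintegral_congr fun y => ?_
  rw [nL, ← lintegral_mul_const' _ _ ENNReal.ofReal_ne_top]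
  refine lintegral_congr fun x => ?_
  rw [Real.rpow_zero, one_mul, ← ENNReal.ofReal_mul (hb_nonneg x y)]
  ring_nf

theorem integral_Ioi_fragOp_eq (ha : Measurable a) (hb : Measurable (Function.uncurry b))
    (hf : Measurable f) (ha_nonneg : ∀ x, 0 ≤ a x) (hb_nonneg : ∀ x y, 0 ≤ b x y)
    (hf_nonneg : ∀ x, 0 ≤ f x) (haf : IntegrableOn (fun y => a y * f y) (Ioi 0))
    (hfin : ∫⁻ y in Ioi 0, nL b 0 y * ENNReal.ofReal (a y * f y) ≠ ∞) :
    ∫ x in Ioi 0, fragOp a b f x = ∫ y in Ioi 0, (nmom b 0 y - 1) * a y * f y := by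
  set G : ℝ → ℝ≥0∞ := fun x => ∫⁻ y in Ioi x, ENNReal.ofReal (a y * b x y * f y)
  set N : ℝ → ℝ≥0∞ := fun y => nL b 0 y * ENNReal.ofReal (a y * f y)
  have hG : Measurable G :=
    Measurable.lintegral_restrict_prodMk_preimage (measurableSet_lt measurable_fst measurable_snd)
      (K := fun p => ENNReal.ofReal (a p.2 * b p.1 p.2 * f p.2)) (by fun_prop)
  have hN : Measurable N := (measurable_nL hb 0).mul (by fun_prop)
  have hGN : ∫⁻ x in Ioi 0, G x = ∫⁻ y in Ioi 0, N y :=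
    lintegral_Ioi_lintegral_Ioi_eq_lintegral_nL_mul ha hb hf hb_nonneg
  have hG_fin : ∫⁻ x in Ioi 0, G x ≠ ∞ := hGN ▸ hfin
  have hG_toReal : ∀ x, ∫ y in Ioi x, a y * b x y * f y = (G x).toReal := fun x =>
    integral_eq_lintegral_of_nonneg_ae
      (ae_of_all _ fun y => mul_nonneg (mul_nonneg (ha_nonneg y) (hb_nonneg x y)) (hf_nonneg y))
      (by fun_prop)
  have hN_toReal : ∀ y, nmom b 0 y * (a y * f y) = (N y).toReal := fun y => by
    rw [ENNReal.toReal_mul, nmom_eq_toReal_nL hb hb_nonneg,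
      ENNReal.toReal_ofReal (mul_nonneg (ha_nonneg y) (hf_nonneg y))]
  calc ∫ x in Ioi 0, fragOp a b f x = ∫ x in Ioi 0, (G x).toReal - a x * f x := by
        simp only [fragOp, hG_toReal, neg_add_eq_sub]
    _ = ∫ y in Ioi 0, (N y).toReal - a y * f y := by
        rw [integral_sub (integrable_toReal_of_lintegral_ne_top hG.aemeasurable hG_fin) haf,
          integral_sub (integrable_toReal_of_lintegral_ne_top hN.aemeasurable hfin) haf,
          integral_toReal hG.aemeasurable (ae_lt_top hG hG_fin),
          integral_toReal hN.aemeasurable (ae_lt_top hN hfin), hGN]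
    _ = ∫ y in Ioi 0, (nmom b 0 y - 1) * a y * f y := by
        simp only [← hN_toReal]
        ring_nf

theorem nL_mul_ofReal_le {y l i b₀ : ℝ} (hy : 0 < y) (hl : 0 ≤ l) (hli : l ≤ i) (hb₀ : 0 ≤ b₀)
    (haf : 0 ≤ a y * f y) (hn : nL b 0 y ≤ ENNReal.ofReal (b₀ * (1 + y ^ l))) :
    nL b 0 y * ENNReal.ofReal (a y * f y)
      ≤ ENNReal.ofReal (2 * b₀) * ENNReal.ofReal (a y * (1 + y ^ i) * f y) := by
  have hpow := mul_le_mul_of_nonneg_left (one_add_rpow_le_two_mul_one_add_rpow hy hl hli)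
    (mul_nonneg hb₀ haf)
  calc nL b 0 y * ENNReal.ofReal (a y * f y)
      ≤ ENNReal.ofReal (b₀ * (1 + y ^ l)) * ENNReal.ofReal (a y * f y) := by gcongr
    _ = ENNReal.ofReal (b₀ * (1 + y ^ l) * (a y * f y)) := (ENNReal.ofReal_mul' haf).symm
    _ ≤ ENNReal.ofReal (2 * b₀ * (a y * (1 + y ^ i) * f y)) :=
        ENNReal.ofReal_le_ofReal (by linarith)
    _ = ENNReal.ofReal (2 * b₀) * ENNReal.ofReal (a y * (1 + y ^ i) * f y) :=
        ENNReal.ofReal_mul (by positivity)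

theorem ofReal_nmom_sub_one_mul_le (hb : Measurable (Function.uncurry b))
    (hb_nonneg : ∀ x y, 0 ≤ b x y) {y : ℝ} (haf : 0 ≤ a y * f y) :
    ENNReal.ofReal ((nmom b 0 y - 1) * a y * f y) ≤ nL b 0 y * ENNReal.ofReal (a y * f y) := by
  rw [nmom_eq_toReal_nL hb hb_nonneg]
  calc ENNReal.ofReal (((nL b 0 y).toReal - 1) * a y * f y)
      ≤ ENNReal.ofReal ((nL b 0 y).toReal * (a y * f y)) := ENNReal.ofReal_le_ofReal (by linarith)
    _ = ENNReal.ofReal (nL b 0 y).toReal * ENNReal.ofReal (a y * f y) :=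
        ENNReal.ofReal_mul ENNReal.toReal_nonneg
    _ ≤ nL b 0 y * ENNReal.ofReal (a y * f y) := by gcongr; exact ENNReal.ofReal_toReal_le

theorem integrableOn_mul_of_lintegral_mul_one_add_rpow_lt_top {i : ℝ} (ha : Measurable a)
    (hf : Measurable f) (haf_nonneg : ∀ y, 0 ≤ a y * f y)
    (hint : ∫⁻ y in Ioi 0, ENNReal.ofReal (a y * (1 + y ^ i) * f y) < ∞) :
    IntegrableOn (fun y => a y * f y) (Ioi 0) := by
  refine ⟨by fun_prop, (hasFiniteIntegral_iff_ofReal (ae_of_all _ haf_nonneg)).2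
    ((lintegral_mono_ae ?_).trans_lt hint)⟩
  filter_upwards [ae_restrict_mem measurableSet_Ioi] with y hy
  exact ENNReal.ofReal_le_ofReal
    (by nlinarith [mul_nonneg (haf_nonneg y) (Real.rpow_nonneg hy.le i)])

end Fragmentation

theorem isBoundedUnder_ae_mul_one_add_rpow {a : ℝ → ℝ} {i : ℝ} (hi : 0 ≤ i)
    (ha_nonneg : ∀ x, 0 ≤ a x)
    (ha : IsBoundedUnder (· ≤ ·) (ae (volume.restrict (Ioc (0:ℝ) 1))) a) :
    IsBoundedUnder (· ≤ ·) (ae (volume.restrict (Ioc (0:ℝ) 1))) fun y => a y * (1 + y ^ i) := by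
  obtain ⟨C, hC⟩ := ha
  refine ⟨2 * C, ?_⟩
  rw [eventually_map] at hC ⊢
  filter_upwards [hC, ae_restrict_mem measurableSet_Ioc] with y haC hy
  have hyi : y ^ i ≤ 1 := Real.rpow_le_one hy.1.le hy.2 hi
  nlinarith [ha_nonneg y]

theorem stmt18_general (a : ℝ → ℝ) (b : ℝ → ℝ → ℝ) (l b₀ i : ℝ) (f : ℝ → ℝ)
    (ha_meas : Measurable a) (ha_nonneg : ∀ x, 0 ≤ a x)
    (ha_bdd : Filter.IsBoundedUnder (· ≤ ·)
      (MeasureTheory.ae (volume.restrict (Set.Ioc (0:ℝ) 1))) a)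
    (hb_meas : Measurable (Function.uncurry b))
    (hb_nonneg : ∀ x y, 0 ≤ b x y)
    (hl : 0 ≤ l) (hb₀ : 0 < b₀)
    (hn0 : ∀ᵐ x ∂(volume.restrict (Set.Ioi (0:ℝ))),
      nL b 0 x ≤ ENNReal.ofReal (b₀ * (1 + x ^ l)))
    (hi : max 1 l ≤ i)
    (hf_meas : Measurable f) (hf_nonneg : ∀ x, 0 ≤ f x)
    (hf_int : ∫⁻ y in Set.Ioi (0:ℝ), ENNReal.ofReal (a y * (1 + y ^ i) * f y) < ∞) :
    (∫ x in Set.Ioi (0:ℝ), fragOp a b f x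
        = ∫ y in Set.Ioi (0:ℝ), (nmom b 0 y - 1) * a y * f y) ∧
    (∫⁻ y in Set.Ioi (0:ℝ), ENNReal.ofReal ((nmom b 0 y - 1) * a y * f y))
      ≤ ENNReal.ofReal (2 * b₀ *
            essSup (fun y => a y * (1 + y ^ i)) (volume.restrict (Set.Ioc (0:ℝ) 1))) *
          (∫⁻ y in Set.Ioc (0:ℝ) 1, ENNReal.ofReal (f y)) +
        ENNReal.ofReal (2 * b₀) *
          ∫⁻ y in Set.Ioi (1:ℝ), ENNReal.ofReal (a y * (1 + y ^ i) * f y) := by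
  have hli : l ≤ i := le_of_max_le_right hi
  have haf_nonneg : ∀ y, 0 ≤ a y * f y := fun y => mul_nonneg (ha_nonneg y) (hf_nonneg y)
  have hN_le : ∀ᵐ y ∂volume.restrict (Ioi 0), nL b 0 y * ENNReal.ofReal (a y * f y)
      ≤ ENNReal.ofReal (2 * b₀) * ENNReal.ofReal (a y * (1 + y ^ i) * f y) := by
    filter_upwards [hn0, ae_restrict_mem measurableSet_Ioi] with y hn hy
    exact nL_mul_ofReal_le hy hl hli hb₀.le (haf_nonneg y) hn
  have hN_fin : ∫⁻ y in Ioi 0, nL b 0 y * ENNReal.ofReal (a y * f y) ≠ ∞ :=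
    ((lintegral_mono_ae hN_le).trans_eq (lintegral_const_mul' _ _ ENNReal.ofReal_ne_top)).trans_lt
      (ENNReal.mul_lt_top ENNReal.ofReal_lt_top hf_int) |>.ne
  have haf : IntegrableOn (fun y => a y * f y) (Ioi 0) :=
    integrableOn_mul_of_lintegral_mul_one_add_rpow_lt_top ha_meas hf_meas haf_nonneg hf_int
  refine ⟨integral_Ioi_fragOp_eq ha_meas hb_meas hf_meas ha_nonneg hb_nonneg hf_nonneg haf hN_fin,
    ?_⟩
  have hle : ∀ᵐ y ∂volume.restrict (Ioi 0), ENNReal.ofReal ((nmom b 0 y - 1) * a y * f y)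
      ≤ ENNReal.ofReal (2 * b₀) * ENNReal.ofReal (a y * (1 + y ^ i) * f y) :=
    hN_le.mono fun y hy => (ofReal_nmom_sub_one_mul_le hb_meas hb_nonneg (haf_nonneg y)).trans hy
  rw [← Ioc_union_Ioi_eq_Ioi (zero_le_one' ℝ), lintegral_union measurableSet_Ioi
    (Ioc_disjoint_Ioi le_rfl)]
  gcongr ?_ + ?_
  · exact (lintegral_mono_ae (ae_restrict_of_ae_restrict_of_subset Ioc_subset_Ioi_self hle)).trans
      (lintegral_ofReal_mul_le_essSup_mul (by positivity) (ae_of_all _ hf_nonneg)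
        (isBoundedUnder_ae_mul_one_add_rpow (zero_le_one.trans (le_of_max_le_left hi)) ha_nonneg
          ha_bdd))
  · exact (lintegral_mono_ae
      (ae_restrict_of_ae_restrict_of_subset (Ioi_subset_Ioi zero_le_one) hle)).trans_eq
      (lintegral_const_mul' _ _ ENNReal.ofReal_ne_top)

/-- the zeroth moment estimate for the fragmentation operator:
`∫₀^∞ (Ff)(x) dx = ∫₀^∞ (n₀(y)−1) a(y) f(y) dy
  ≤ a₁ ∫₀^1 f(y) dy + 2b₀ ∫₁^∞ a(y)(1+y^i) f(y) dy`, with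
`a₁ = 2b₀ · ess sup_{0<y≤1} a(y)(1+y^i)`. -/
theorem stmt18 (a : ℝ → ℝ) (b : ℝ → ℝ → ℝ) (l b₀ i : ℝ) (f : ℝ → ℝ)
    (ha_meas : Measurable a) (ha_nonneg : ∀ x, 0 ≤ a x)
    (ha_bdd : Filter.IsBoundedUnder (· ≤ ·)
      (MeasureTheory.ae (volume.restrict (Set.Ioc (0:ℝ) 1))) a)
    (hb_meas : Measurable (Function.uncurry b))
    (hb_nonneg : ∀ x y, 0 ≤ b x y)
    (hb_supp : ∀ y : ℝ, 0 < y → ∀ᵐ x ∂(volume : Measure ℝ), y < x → b x y = 0)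
    (hb_mass : ∀ y : ℝ, 0 < y → ∫ x in Set.Ioo 0 y, x * b x y = y)
    (hl : 0 ≤ l) (hb₀ : 0 < b₀)
    (hn0 : ∀ᵐ x ∂(volume.restrict (Set.Ioi (0:ℝ))),
      nL b 0 x ≤ ENNReal.ofReal (b₀ * (1 + x ^ l)))
    (hi : max 1 l ≤ i)
    (hf_meas : Measurable f) (hf_nonneg : ∀ x, 0 ≤ f x)
    (hf_int : ∫⁻ y in Set.Ioi (0:ℝ), ENNReal.ofReal (a y * (1 + y ^ i) * f y) < ∞) :
    (∫ x in Set.Ioi (0:ℝ), fragOp a b f x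
        = ∫ y in Set.Ioi (0:ℝ), (nmom b 0 y - 1) * a y * f y) ∧
    (∫⁻ y in Set.Ioi (0:ℝ), ENNReal.ofReal ((nmom b 0 y - 1) * a y * f y))
      ≤ ENNReal.ofReal (2 * b₀ *
            essSup (fun y => a y * (1 + y ^ i)) (volume.restrict (Set.Ioc (0:ℝ) 1))) *
          (∫⁻ y in Set.Ioc (0:ℝ) 1, ENNReal.ofReal (f y)) +
        ENNReal.ofReal (2 * b₀) *
          ∫⁻ y in Set.Ioi (1:ℝ), ENNReal.ofReal (a y * (1 + y ^ i) * f y) :=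
  stmt18_general a b l b₀ i f ha_meas ha_nonneg ha_bdd hb_meas hb_nonneg hl hb₀ hn0 hi hf_meas
    hf_nonneg hf_int
end
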